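/- arXiv:2401.17708 — 3 statements merged into one kernel-verified Lean document; each statement's English description precedes it below -/
import Mathlib

section
/- If D is stable, then the operator D̂: BU → BU, (D̂x)(s) = Dx_s, is bijective; its inverse D̂^{−1} is bounded for the supremum norm, and for each r > 0 it is uniformly continuous on B_r for the compact-open topology: given ε > 0 there is δ(r) > 0 such that d(D̂^{−1}h_1, D̂^{−1}h_2) < ε for all h_1, h_2 ∈ B_r with d(h_1,h_2) < δ(r). -/
open MeasureTheory Filter Set

/-- `x` is bounded and uniformly continuous on `(-∞,0]` (membership in `BU`,
where only the restriction of `x` to `(-∞,0]` is relevant). -/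
def IsBU (m : ℕ) (x : ℝ → Fin m → ℝ) : Prop :=
  (∃ C : ℝ, ∀ s : ℝ, s ≤ 0 → ‖x s‖ ≤ C) ∧
  ∀ ε > (0:ℝ), ∃ δ > (0:ℝ), ∀ s : ℝ, s ≤ 0 → ∀ s' : ℝ, s' ≤ 0 →
    |s - s'| < δ → ‖x s - x s'‖ < ε

/-- the supremum norm `‖x‖_∞ = sup_{s ≤ 0} ‖x(s)‖`. -/
noncomputable def supNorm (m : ℕ) (x : ℝ → Fin m → ℝ) : ℝ :=
  ⨆ s : Set.Iic (0:ℝ), ‖x (s : ℝ)‖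

/-- time shift: `shift m x t = x_t`, where `x_t(s) = x(t+s)`. -/
def shift (m : ℕ) (x : ℝ → Fin m → ℝ) (t : ℝ) : ℝ → Fin m → ℝ :=
  fun s => x (t + s)

/-- The operator `Dx = x(0) - ∫_{-∞}^0 [dν(s)] x(s)`, where the matrix of real
(signed) Borel measures `ν` is given through a positive part `νp` and a
negative part `νn` (Jordan decomposition), i.e. `ν i j = νp i j - νn i j`. -/
noncomputable def Dop (m : ℕ) (νp νn : Fin m → Fin m → Measure ℝ)
    (x : ℝ → Fin m → ℝ) : Fin m → ℝ :=
  fun i => x 0 i - ∑ j : Fin m,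
    ((∫ s in Set.Iic (0:ℝ), x s j ∂(νp i j)) - ∫ s in Set.Iic (0:ℝ), x s j ∂(νn i j))

/-- the measures `ν_ij` have finite total variation and `|ν_ij|({0}) = 0`. -/
def NuCond (m : ℕ) (νp νn : Fin m → Fin m → Measure ℝ) : Prop :=
  (∀ i j, νp i j Set.univ ≠ ⊤) ∧ (∀ i j, νn i j Set.univ ≠ ⊤) ∧
  (∀ i j, νp i j {0} = 0) ∧ (∀ i j, νn i j {0} = 0)

/-- `D` is stable: there is a continuous `c : [0,∞) → [0,∞)` with `c(t) → 0`
as `t → ∞` such that every continuous `x : ℝ → ℝ^m` with `x_0 ∈ BU` and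
`D x_t = 0` for all `t ≥ 0` satisfies `‖x(t)‖ ≤ c(t) ‖x_0‖_∞` for all `t ≥ 0`. -/
def IsStableOp (m : ℕ) (D : (ℝ → Fin m → ℝ) → Fin m → ℝ) : Prop :=
  ∃ c : ℝ → ℝ, ContinuousOn c (Set.Ici 0) ∧ (∀ t : ℝ, 0 ≤ t → 0 ≤ c t) ∧
    Filter.Tendsto c Filter.atTop (nhds 0) ∧
    ∀ x : ℝ → Fin m → ℝ, Continuous x → IsBU m x →
      (∀ t : ℝ, 0 ≤ t → D (shift m x t) = 0) →
      ∀ t : ℝ, 0 ≤ t → ‖x t‖ ≤ c t * supNorm m x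

/-- the convolution operator `D̂`, `(D̂x)(s) = D x_s`. -/
noncomputable def Dhat (m : ℕ) (νp νn : Fin m → Fin m → Measure ℝ)
    (x : ℝ → Fin m → ℝ) : ℝ → Fin m → ℝ :=
  fun s => Dop m νp νn (shift m x s)

/-- the seminorm `‖x‖_n = sup_{s ∈ [-n,0]} ‖x(s)‖`. -/
noncomputable def normOn (m : ℕ) (n : ℕ) (x : ℝ → Fin m → ℝ) : ℝ :=
  ⨆ s : Set.Icc (-(n:ℝ)) 0, ‖x (s : ℝ)‖

/-- the compact-open metric
`d(x,y) = ∑_{n ≥ 1} 2⁻ⁿ ‖x-y‖_n / (1 + ‖x-y‖_n)`. -/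
noncomputable def coDist (m : ℕ) (x y : ℝ → Fin m → ℝ) : ℝ :=
  ∑' n : ℕ, (1/2 : ℝ)^(n+1) *
    (normOn m (n+1) (fun s => x s - y s)) / (1 + normOn m (n+1) (fun s => x s - y s))

/-- `sup_{0 ≤ u ≤ t} ‖h(u)‖`. -/
noncomputable def supOn (m : ℕ) (h : ℝ → Fin m → ℝ) (t : ℝ) : ℝ :=
  ⨆ u : Set.Icc (0:ℝ) t, ‖h (u : ℝ)‖

/-- the order `x ≤_D y`, i.e. `D x_s ≤ D y_s` (componentwise) for all `s ≤ 0`. -/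
def leD (m : ℕ) (νp νn : Fin m → Fin m → Measure ℝ) (x y : ℝ → Fin m → ℝ) : Prop :=
  ∀ s : ℝ, s ≤ 0 → ∀ i, Dhat m νp νn x s i ≤ Dhat m νp νn y s i

section S7
open MeasureTheory Set Filter
open scoped NNReal ENNReal

variable {m : ℕ} {νp νn : Fin m → Fin m → Measure ℝ}

/-- continuous and bounded on `(-∞, b]`. -/
def CB (x : ℝ → Fin m → ℝ) (b : ℝ) : Prop :=
  ContinuousOn x (Iic b) ∧ ∃ C, ∀ t ≤ b, ‖x t‖ ≤ C

lemma CB.mono {x : ℝ → Fin m → ℝ} {b b' : ℝ} (h : CB x b) (hb : b' ≤ b) : CB x b' :=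
  ⟨h.1.mono (Iic_subset_Iic.2 hb), h.2.imp fun C hC t ht => hC t (ht.trans hb)⟩

lemma CB.of_continuous {x : ℝ → Fin m → ℝ} (hx : Continuous x)
    (hb : ∃ C, ∀ t, ‖x t‖ ≤ C) (b : ℝ) : CB x b :=
  ⟨hx.continuousOn, hb.imp fun C hC t _ => hC t⟩

noncomputable def IP (νp νn : Fin m → Fin m → Measure ℝ) (x : ℝ → Fin m → ℝ) (t : ℝ) :
    Fin m → ℝ :=
  fun i => ∑ j, ((∫ s in Iic (0:ℝ), x (t+s) j ∂(νp i j)) - ∫ s in Iic (0:ℝ), x (t+s) j ∂(νn i j))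

lemma Dop_shift (x : ℝ → Fin m → ℝ) (t : ℝ) :
    Dop m νp νn (shift m x t) = fun i => x t i - IP νp νn x t i := by
  funext i; simp [Dop, shift, IP]

lemma integrableOn_aux {x : ℝ → Fin m → ℝ} {t : ℝ} (hx : CB x t) (μ : Measure ℝ)
    (hμ : μ Set.univ ≠ ⊤) (j : Fin m) :
    IntegrableOn (fun s => x (t+s) j) (Iic (0:ℝ)) μ := by
  obtain ⟨C, hC⟩ := hx.2
  have hts : ∀ s : ℝ, s ∈ Iic (0:ℝ) → t + s ∈ Iic t := fun s hs => by
    simpa using add_le_add_left (mem_Iic.1 hs) t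
  have hcont : ContinuousOn (fun s : ℝ => x (t+s) j) (Iic 0) := by
    have h1 : ContinuousOn (fun s : ℝ => x (t+s)) (Iic 0) :=
      hx.1.comp (continuous_const.add continuous_id).continuousOn hts
    exact (continuous_apply j).comp_continuousOn h1
  have hlt : μ (Iic (0:ℝ)) < ⊤ :=
    lt_of_le_of_lt (measure_mono (subset_univ _)) (lt_top_iff_ne_top.2 hμ)
  refine Integrable.mono' (g := fun _ => C)
    (integrableOn_const hlt.ne)
    (hcont.aestronglyMeasurable measurableSet_Iic) ?_
  refine (ae_restrict_iff' measurableSet_Iic).2 (ae_of_all _ fun s hs => ?_)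
  exact le_trans (norm_le_pi_norm _ j) (hC _ (hts s hs))

noncomputable def Mtot (νp νn : Fin m → Fin m → Measure ℝ) : ℝ :=
  ∑ i, ∑ j, ((νp i j (Iic 0)).toReal + (νn i j (Iic 0)).toReal)

noncomputable def qmass (νp νn : Fin m → Fin m → Measure ℝ) (δ : ℝ) : ℝ :=
  ∑ i, ∑ j, ((νp i j (Ioc (-δ) 0)).toReal + (νn i j (Ioc (-δ) 0)).toReal)

lemma Mtot_nonneg : 0 ≤ Mtot νp νn :=
  Finset.sum_nonneg fun _ _ => Finset.sum_nonneg fun _ _ =>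
    add_nonneg ENNReal.toReal_nonneg ENNReal.toReal_nonneg

lemma qmass_nonneg (δ : ℝ) : 0 ≤ qmass νp νn δ :=
  Finset.sum_nonneg fun _ _ => Finset.sum_nonneg fun _ _ =>
    add_nonneg ENNReal.toReal_nonneg ENNReal.toReal_nonneg

lemma exists_delta0 (hν : NuCond m νp νn) : ∃ δ₀ : ℝ, 0 < δ₀ ∧ qmass νp νn δ₀ < 1/2 := by
  have key : ∀ (μ : Measure ℝ), μ Set.univ ≠ ⊤ → μ {(0:ℝ)} = 0 →
      Tendsto (fun n : ℕ => (μ (Ioc (-(1/((n:ℝ)+1))) 0)).toReal) atTop (nhds 0) := by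
    intro μ hfin h0
    have hanti : Antitone fun n : ℕ => Ioc (-(1/((n:ℝ)+1))) (0:ℝ) := by
      intro a b hab
      apply Ioc_subset_Ioc _ le_rfl
      rw [neg_le_neg_iff]
      apply one_div_le_one_div_of_le (by positivity)
      linarith [(Nat.cast_le (α := ℝ)).2 hab]
    have hInter : ⋂ n : ℕ, Ioc (-(1/((n:ℝ)+1))) (0:ℝ) = {0} := by
      ext x
      simp only [mem_iInter, mem_Ioc, mem_singleton_iff]
      constructor
      · rintro h
        have h0' := h 0
        rcases lt_or_ge x 0 with hx | hx
        · exfalso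
          obtain ⟨n, hn⟩ := exists_nat_one_div_lt (show (0:ℝ) < -x by linarith)
          have := (h n).1
          have : -(1/((n:ℝ)+1)) < x := this
          have : (1:ℝ)/(n+1) < -x := hn
          linarith
        · exact le_antisymm h0'.2 hx
      · rintro rfl
        exact fun n => ⟨neg_lt_zero.mpr (by positivity), le_rfl⟩
    have hmeas : ∀ n : ℕ, NullMeasurableSet (Ioc (-(1/((n:ℝ)+1))) (0:ℝ)) μ :=
      fun n => measurableSet_Ioc.nullMeasurableSet
    have h1 := MeasureTheory.tendsto_measure_iInter_atTop (μ := μ) hmeas hanti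
      ⟨0, by
        exact ne_top_of_le_ne_top hfin (measure_mono (subset_univ _))⟩
    rw [hInter, h0] at h1
    have h2 := (ENNReal.tendsto_toReal (show (0:ENNReal) ≠ ⊤ by simp)).comp h1
    simpa [Function.comp_def] using h2
  have hsum : Tendsto (fun n : ℕ => qmass νp νn (1/((n:ℝ)+1))) atTop (nhds 0) := by
    have : Tendsto (fun n : ℕ => ∑ i, ∑ j,
        ((νp i j (Ioc (-(1/((n:ℝ)+1))) 0)).toReal + (νn i j (Ioc (-(1/((n:ℝ)+1))) 0)).toReal))
        atTop (nhds (∑ i : Fin m, ∑ j : Fin m, ((0:ℝ) + 0))) := by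
      apply tendsto_finset_sum
      intro i _
      apply tendsto_finset_sum
      intro j _
      exact Tendsto.add (key _ (hν.1 i j) (hν.2.2.1 i j)) (key _ (hν.2.1 i j) (hν.2.2.2 i j))
    simpa [qmass] using this
  have := (hsum.eventually (eventually_lt_nhds (show (0:ℝ) < 1/2 by norm_num))).exists
  obtain ⟨n, hn⟩ := this
  exact ⟨1/((n:ℝ)+1), by positivity, hn⟩

end S7

section S7b
open MeasureTheory Set Filter
open scoped NNReal ENNReal

variable {m : ℕ} {νp νn : Fin m → Fin m → Measure ℝ}

lemma setint_bound (μ : Measure ℝ) (hμ : μ Set.univ ≠ ⊤) {f : ℝ → ℝ}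
    (hfi : IntegrableOn f (Iic (0:ℝ)) μ) {δ B₁ B₂ : ℝ} (hδ : 0 < δ)
    (hB₁ : 0 ≤ B₁) (hB₂ : 0 ≤ B₂)
    (h₁ : ∀ s ≤ -δ, |f s| ≤ B₁) (h₂ : ∀ s, -δ < s → s ≤ 0 → |f s| ≤ B₂) :
    |∫ s in Iic (0:ℝ), f s ∂μ| ≤ B₁ * (μ (Iic 0)).toReal + B₂ * (μ (Ioc (-δ) 0)).toReal := by
  have hfin : ∀ s : Set ℝ, μ s < ⊤ := fun s =>
    lt_of_le_of_lt (measure_mono (subset_univ _)) (lt_top_iff_ne_top.2 hμ)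
  have hsplit : Iic (0:ℝ) = Iic (-δ) ∪ Ioc (-δ) 0 :=
    (Iic_union_Ioc_eq_Iic (by linarith)).symm
  have hi1 : IntegrableOn f (Iic (-δ)) μ := hfi.mono_set (by rw [hsplit]; exact subset_union_left)
  have hi2 : IntegrableOn f (Ioc (-δ) 0) μ := hfi.mono_set (by rw [hsplit]; exact subset_union_right)
  rw [show (∫ s in Iic (0:ℝ), f s ∂μ) = ∫ s in Iic (-δ) ∪ Ioc (-δ) 0, f s ∂μ from by
    rw [← hsplit], MeasureTheory.setIntegral_union (Iic_disjoint_Ioc le_rfl) measurableSet_Ioc hi1 hi2]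
  have b1 : |∫ s in Iic (-δ), f s ∂μ| ≤ B₁ * (μ (Iic (-δ))).toReal := by
    rw [← Real.norm_eq_abs]
    exact MeasureTheory.norm_setIntegral_le_of_norm_le_const (hfin _)
      (fun s hs => by rw [Real.norm_eq_abs]; exact h₁ s hs)
  have b2 : |∫ s in Ioc (-δ) 0, f s ∂μ| ≤ B₂ * (μ (Ioc (-δ) 0)).toReal := by
    rw [← Real.norm_eq_abs]
    exact MeasureTheory.norm_setIntegral_le_of_norm_le_const (hfin _)
      (fun s hs => by rw [Real.norm_eq_abs]; exact h₂ s hs.1 hs.2)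
  have hmono : (μ (Iic (-δ))).toReal ≤ (μ (Iic 0)).toReal :=
    ENNReal.toReal_mono (lt_top_iff_ne_top.1 (hfin _))
      (measure_mono (Iic_subset_Iic.2 (by linarith)))
  calc |∫ s in Iic (-δ), f s ∂μ + ∫ s in Ioc (-δ) 0, f s ∂μ|
      ≤ |∫ s in Iic (-δ), f s ∂μ| + |∫ s in Ioc (-δ) 0, f s ∂μ| := abs_add_le _ _
    _ ≤ B₁ * (μ (Iic 0)).toReal + B₂ * (μ (Ioc (-δ) 0)).toReal := by
        refine add_le_add (b1.trans ?_) b2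
        exact mul_le_mul_of_nonneg_left hmono hB₁

lemma norm_IP_le (hν : NuCond m νp νn) {x : ℝ → Fin m → ℝ} {t : ℝ} (hx : CB x t)
    {δ B₁ B₂ : ℝ} (hδ : 0 < δ) (hB₁ : 0 ≤ B₁) (hB₂ : 0 ≤ B₂)
    (h₁ : ∀ u ≤ t - δ, ‖x u‖ ≤ B₁) (h₂ : ∀ u, t - δ < u → u ≤ t → ‖x u‖ ≤ B₂) :
    ∀ i, |IP νp νn x t i| ≤ Mtot νp νn * B₁ + qmass νp νn δ * B₂ := by
  intro i
  have key : ∀ (μ : Measure ℝ), μ Set.univ ≠ ⊤ → ∀ j : Fin m,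
      |∫ s in Iic (0:ℝ), x (t+s) j ∂μ| ≤
        B₁ * (μ (Iic 0)).toReal + B₂ * (μ (Ioc (-δ) 0)).toReal := by
    intro μ hμ j
    refine setint_bound μ hμ (integrableOn_aux hx μ hμ j) hδ hB₁ hB₂ ?_ ?_
    · intro s hs
      calc |x (t+s) j| ≤ ‖x (t+s)‖ := by
            rw [← Real.norm_eq_abs]; exact norm_le_pi_norm _ j
        _ ≤ B₁ := h₁ _ (by linarith)
    · intro s hs1 hs2
      calc |x (t+s) j| ≤ ‖x (t+s)‖ := by
            rw [← Real.norm_eq_abs]; exact norm_le_pi_norm _ j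
        _ ≤ B₂ := h₂ _ (by linarith) (by linarith)
  have hterm : ∀ j : Fin m,
      |(∫ s in Iic (0:ℝ), x (t+s) j ∂(νp i j)) - ∫ s in Iic (0:ℝ), x (t+s) j ∂(νn i j)| ≤
        (B₁ * ((νp i j (Iic 0)).toReal + (νn i j (Iic 0)).toReal) +
         B₂ * ((νp i j (Ioc (-δ) 0)).toReal + (νn i j (Ioc (-δ) 0)).toReal)) := by
    intro j
    have h1 := key (νp i j) (hν.1 i j) j
    have h2 := key (νn i j) (hν.2.1 i j) j
    calc |(∫ s in Iic (0:ℝ), x (t+s) j ∂(νp i j)) - ∫ s in Iic (0:ℝ), x (t+s) j ∂(νn i j)|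
        ≤ |∫ s in Iic (0:ℝ), x (t+s) j ∂(νp i j)| + |∫ s in Iic (0:ℝ), x (t+s) j ∂(νn i j)| :=
          abs_sub _ _
      _ ≤ _ := by rw [mul_add, mul_add]; linarith
  calc |IP νp νn x t i| ≤ ∑ j, |(∫ s in Iic (0:ℝ), x (t+s) j ∂(νp i j)) -
        ∫ s in Iic (0:ℝ), x (t+s) j ∂(νn i j)| := Finset.abs_sum_le_sum_abs _ _
    _ ≤ ∑ j, (B₁ * ((νp i j (Iic 0)).toReal + (νn i j (Iic 0)).toReal) +
         B₂ * ((νp i j (Ioc (-δ) 0)).toReal + (νn i j (Ioc (-δ) 0)).toReal)) :=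
        Finset.sum_le_sum fun j _ => hterm j
    _ = B₁ * (∑ j, ((νp i j (Iic 0)).toReal + (νn i j (Iic 0)).toReal)) +
        B₂ * (∑ j, ((νp i j (Ioc (-δ) 0)).toReal + (νn i j (Ioc (-δ) 0)).toReal)) := by
        rw [Finset.sum_add_distrib, Finset.mul_sum, Finset.mul_sum]
    _ ≤ Mtot νp νn * B₁ + qmass νp νn δ * B₂ := by
        have hp : (∑ j, ((νp i j (Iic 0)).toReal + (νn i j (Iic 0)).toReal)) ≤ Mtot νp νn := by
          apply Finset.single_le_sum (f := fun i => ∑ j,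
            ((νp i j (Iic 0)).toReal + (νn i j (Iic 0)).toReal))
            (fun i _ => Finset.sum_nonneg fun j _ =>
              add_nonneg ENNReal.toReal_nonneg ENNReal.toReal_nonneg) (Finset.mem_univ i)
        have hq : (∑ j, ((νp i j (Ioc (-δ) 0)).toReal + (νn i j (Ioc (-δ) 0)).toReal)) ≤
            qmass νp νn δ := by
          apply Finset.single_le_sum (f := fun i => ∑ j,
            ((νp i j (Ioc (-δ) 0)).toReal + (νn i j (Ioc (-δ) 0)).toReal))
            (fun i _ => Finset.sum_nonneg fun j _ =>
              add_nonneg ENNReal.toReal_nonneg ENNReal.toReal_nonneg) (Finset.mem_univ i)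
        rw [mul_comm (Mtot νp νn), mul_comm (qmass νp νn δ)]
        exact add_le_add (mul_le_mul_of_nonneg_left hp hB₁) (mul_le_mul_of_nonneg_left hq hB₂)

/-- pointwise estimate: `‖x t‖ ≤ ‖D x_t‖ + M B₁ + q B₂`. -/
lemma PE (hν : NuCond m νp νn) {x : ℝ → Fin m → ℝ} {t : ℝ} (hx : CB x t)
    {δ G B₁ B₂ : ℝ} (hδ : 0 < δ) (hB₁ : 0 ≤ B₁) (hB₂ : 0 ≤ B₂)
    (hG : ‖Dop m νp νn (shift m x t)‖ ≤ G)
    (h₁ : ∀ u ≤ t - δ, ‖x u‖ ≤ B₁) (h₂ : ∀ u, t - δ < u → u ≤ t → ‖x u‖ ≤ B₂) :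
    ‖x t‖ ≤ G + Mtot νp νn * B₁ + qmass νp νn δ * B₂ := by
  have hG0 : 0 ≤ G := le_trans (norm_nonneg _) hG
  have hnn : 0 ≤ G + Mtot νp νn * B₁ + qmass νp νn δ * B₂ :=
    add_nonneg (add_nonneg hG0 (mul_nonneg Mtot_nonneg hB₁)) (mul_nonneg (qmass_nonneg δ) hB₂)
  rw [pi_norm_le_iff_of_nonneg hnn]
  intro i
  have heq : x t i = Dop m νp νn (shift m x t) i + IP νp νn x t i := by
    rw [Dop_shift]; ring
  have h1 : |Dop m νp νn (shift m x t) i| ≤ G := by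
    rw [← Real.norm_eq_abs]
    exact le_trans (norm_le_pi_norm _ i) hG
  have h2 := norm_IP_le hν hx hδ hB₁ hB₂ h₁ h₂ i
  rw [Real.norm_eq_abs, heq]
  calc |Dop m νp νn (shift m x t) i + IP νp νn x t i| ≤
      |Dop m νp νn (shift m x t) i| + |IP νp νn x t i| := abs_add_le _ _
    _ ≤ _ := by linarith

lemma IP_congr {x y : ℝ → Fin m → ℝ} {t : ℝ} (h : ∀ u ≤ t, x u = y u) :
    IP νp νn x t = IP νp νn y t := by
  funext i
  refine Finset.sum_congr rfl fun j _ => ?_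
  have e : ∀ (μ : Measure ℝ), (∫ s in Iic (0:ℝ), x (t+s) j ∂μ) = ∫ s in Iic (0:ℝ), y (t+s) j ∂μ := by
    intro μ
    refine MeasureTheory.setIntegral_congr_fun measurableSet_Iic fun s hs => ?_
    rw [h (t+s) (by simpa using add_le_add_left (mem_Iic.1 hs) t)]
  rw [e, e]

lemma Dop_shift_congr {x y : ℝ → Fin m → ℝ} {t : ℝ} (h : ∀ u ≤ t, x u = y u) :
    Dop m νp νn (shift m x t) = Dop m νp νn (shift m y t) := by
  rw [Dop_shift, Dop_shift, IP_congr h, h t le_rfl]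

lemma IP_sub (hν : NuCond m νp νn) {x y : ℝ → Fin m → ℝ} {t : ℝ}
    (hx : CB x t) (hy : CB y t) :
    IP νp νn (fun u => x u - y u) t = fun i => IP νp νn x t i - IP νp νn y t i := by
  funext i
  have e : ∀ (μ : Measure ℝ), μ Set.univ ≠ ⊤ → ∀ j : Fin m,
      (∫ s in Iic (0:ℝ), (x (t+s) - y (t+s)) j ∂μ) =
      (∫ s in Iic (0:ℝ), x (t+s) j ∂μ) - ∫ s in Iic (0:ℝ), y (t+s) j ∂μ := by
    intro μ hμ j
    have : (fun s => (x (t+s) - y (t+s)) j) = fun s => x (t+s) j - y (t+s) j := rfl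
    rw [this, MeasureTheory.integral_sub (integrableOn_aux hx μ hμ j) (integrableOn_aux hy μ hμ j)]
  simp only [IP]
  rw [← Finset.sum_sub_distrib]
  refine Finset.sum_congr rfl fun j _ => ?_
  rw [e _ (hν.1 i j) j, e _ (hν.2.1 i j) j]
  ring

lemma Dop_shift_sub (hν : NuCond m νp νn) {x y : ℝ → Fin m → ℝ} {t : ℝ}
    (hx : CB x t) (hy : CB y t) :
    Dop m νp νn (shift m (fun u => x u - y u) t) =
      fun i => Dop m νp νn (shift m x t) i - Dop m νp νn (shift m y t) i := by
  funext i
  rw [Dop_shift (fun u => x u - y u), Dop_shift, Dop_shift]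
  have := IP_sub hν hx hy
  rw [this]
  simp only [Pi.sub_apply]
  ring

noncomputable def Amat (νp νn : Fin m → Fin m → Measure ℝ) : Fin m → Fin m → ℝ :=
  fun i j => (νp i j (Iic 0)).toReal - (νn i j (Iic 0)).toReal

lemma Dop_const (v : Fin m → ℝ) :
    Dop m νp νn (fun _ => v) = fun i => v i - ∑ j, Amat νp νn i j * v j := by
  funext i
  simp only [Dop, Amat]
  rw [sub_right_inj]
  refine Finset.sum_congr rfl fun j _ => ?_
  rw [MeasureTheory.setIntegral_const, MeasureTheory.setIntegral_const]
  simp [smul_eq_mul]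
  simp only [measureReal_def]; ring

lemma Dop_zero' : Dop m νp νn (fun _ => (0 : Fin m → ℝ)) = 0 := by
  funext i
  rw [Dop_const]
  simp

lemma shift_shift (x : ℝ → Fin m → ℝ) (s t : ℝ) :
    shift m (shift m x s) t = shift m x (s + t) := by
  funext u
  simp [shift, add_assoc]

end S7b

section S7c
open MeasureTheory Set Filter
open scoped NNReal ENNReal

variable {m : ℕ} {νp νn : Fin m → Fin m → Measure ℝ}

lemma IP_continuous (hν : NuCond m νp νn) {x : ℝ → Fin m → ℝ}
    (hx : Continuous x) (hb : ∃ C, ∀ t, ‖x t‖ ≤ C) :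
    Continuous (fun t => IP νp νn x t) := by
  obtain ⟨C, hC⟩ := hb
  have key : ∀ (μ : Measure ℝ), μ Set.univ ≠ ⊤ → ∀ j : Fin m,
      Continuous (fun t => ∫ s in Iic (0:ℝ), x (t+s) j ∂μ) := by
    intro μ hμ j
    rw [continuous_iff_continuousAt]
    intro t₀
    haveI : IsFiniteMeasure (μ.restrict (Iic (0:ℝ))) := by
      constructor
      rw [Measure.restrict_apply_univ]
      exact lt_of_le_of_lt (measure_mono (subset_univ _)) (lt_top_iff_ne_top.2 hμ)
    apply MeasureTheory.continuousAt_of_dominated (bound := fun _ => C)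
    · apply Eventually.of_forall
      intro t
      exact (((continuous_apply j).comp (hx.comp (continuous_const.add continuous_id)))).aestronglyMeasurable
    · apply Eventually.of_forall
      intro t
      exact ae_of_all _ fun s => le_trans (norm_le_pi_norm _ j) (hC _)
    · exact MeasureTheory.integrable_const C
    · exact ae_of_all _ fun s =>
        (((continuous_apply j).comp (hx.comp (continuous_id.add continuous_const)))).continuousAt
  apply continuous_pi
  intro i
  apply continuous_finset_sum
  intro j _
  exact (key (νp i j) (hν.1 i j) j).sub (key (νn i j) (hν.2.1 i j) j)

/-- extension of a candidate on `[a,b]` by `w` on the past and clamping beyond `b`. -/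
noncomputable def extFn (w : ℝ → Fin m → ℝ) (a b : ℝ) (hab : a ≤ b)
    (y : C(Set.Icc a b, Fin m → ℝ)) : ℝ → Fin m → ℝ :=
  fun t => if t ≤ a then w t else y (projIcc a b hab t)

lemma extFn_past (w : ℝ → Fin m → ℝ) {a b : ℝ} (hab : a ≤ b) (y : C(Set.Icc a b, Fin m → ℝ))
    {t : ℝ} (ht : t ≤ a) : extFn w a b hab y t = w t := if_pos ht

lemma extFn_of_not (w : ℝ → Fin m → ℝ) {a b : ℝ} (hab : a ≤ b) (y : C(Set.Icc a b, Fin m → ℝ))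
    {t : ℝ} (ht : ¬ t ≤ a) : extFn w a b hab y t = y (projIcc a b hab t) := if_neg ht

lemma extFn_mem (w : ℝ → Fin m → ℝ) {a b : ℝ} (hab : a ≤ b) (y : C(Set.Icc a b, Fin m → ℝ))
    (hy : y ⟨a, left_mem_Icc.2 hab⟩ = w a) {t : ℝ} (ht : t ∈ Set.Icc a b) :
    extFn w a b hab y t = y ⟨t, ht⟩ := by
  by_cases h : t ≤ a
  · have hta : t = a := le_antisymm h ht.1
    subst hta
    rw [extFn_past w hab y le_rfl]
    exact hy.symm
  · rw [extFn_of_not w hab y h, projIcc_of_mem hab ht]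

lemma extFn_cont (w : ℝ → Fin m → ℝ) {a b : ℝ} (hab : a ≤ b) (hw : Continuous w)
    (y : C(Set.Icc a b, Fin m → ℝ)) (hy : y ⟨a, left_mem_Icc.2 hab⟩ = w a) :
    Continuous (extFn w a b hab y) := by
  apply Continuous.if_le hw (y.continuous.comp (continuous_projIcc)) continuous_id
    continuous_const
  intro x hx
  have hx' : x = a := hx
  subst hx'
  show w x = y (projIcc x b hab x)
  rw [projIcc_left]
  exact hy.symm

lemma extFn_bdd (w : ℝ → Fin m → ℝ) {a b : ℝ} (hab : a ≤ b) (hwb : ∃ C, ∀ t, ‖w t‖ ≤ C)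
    (y : C(Set.Icc a b, Fin m → ℝ)) : ∃ C, ∀ t, ‖extFn w a b hab y t‖ ≤ C := by
  obtain ⟨C, hC⟩ := hwb
  refine ⟨max C ‖y‖, fun t => ?_⟩
  by_cases ht : t ≤ a
  · rw [extFn_past w hab y ht]; exact le_max_of_le_left (hC t)
  · rw [extFn_of_not w hab y ht]
    exact le_max_of_le_right (y.norm_coe_le_norm _)

lemma step_exists (hν : NuCond m νp νn) {δ₀ : ℝ} (hδ₀ : 0 < δ₀) (hq : qmass νp νn δ₀ < 1/2)
    {g w : ℝ → Fin m → ℝ} (hg : Continuous g)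
    (hw : Continuous w) (hwb : ∃ C, ∀ t, ‖w t‖ ≤ C) (a : ℝ)
    (ha : Dop m νp νn (shift m w a) = g a) :
    ∃ w' : ℝ → Fin m → ℝ, Continuous w' ∧ (∀ t ≤ a, w' t = w t) ∧ (∃ C, ∀ t, ‖w' t‖ ≤ C) ∧
      ∀ t ∈ Set.Icc a (a + δ₀), Dop m νp νn (shift m w' t) = g t := by
  classical
  have hle : a ≤ a + δ₀ := by linarith
  haveI : Nonempty (Set.Icc a (a + δ₀)) := ⟨⟨a, left_mem_Icc.2 hle⟩⟩
  set pt : Set.Icc a (a + δ₀) := ⟨a, left_mem_Icc.2 hle⟩ with hpt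
  set S : Set (C(Set.Icc a (a + δ₀), Fin m → ℝ)) := {y | y pt = w a} with hS
  have hScl : IsClosed S := isClosed_singleton.preimage (continuous_eval_const pt)
  haveI : CompleteSpace S := hScl.completeSpace_coe
  haveI : Nonempty S := ⟨⟨ContinuousMap.const _ (w a), rfl⟩⟩
  have Φcont : ∀ y : C(Set.Icc a (a + δ₀), Fin m → ℝ), y ∈ S →
      Continuous (fun t : Set.Icc a (a + δ₀) => g ↑t + IP νp νn (extFn w a (a+δ₀) hle y) ↑t) :=
    fun y hy => (hg.add (IP_continuous hν (extFn_cont w hle hw y hy) (extFn_bdd w hle hwb y))).comp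
      continuous_subtype_val
  have Φfix_val : ∀ y : C(Set.Icc a (a + δ₀), Fin m → ℝ), y ∈ S →
      g a + IP νp νn (extFn w a (a+δ₀) hle y) a = w a := by
    intro y hy
    have ha' : (fun i => w a i - IP νp νn w a i) = g a := by rw [← Dop_shift]; exact ha
    have hIP : IP νp νn (extFn w a (a+δ₀) hle y) a = IP νp νn w a :=
      IP_congr (fun u hu => extFn_past w hle y hu)
    funext i
    have h1 := congrFun ha' i
    have h2 := congrFun hIP i
    simp only [Pi.add_apply]
    rw [h2]
    linarith
  let Φ : S → S := fun y =>
    ⟨⟨fun t : Set.Icc a (a + δ₀) => g ↑t + IP νp νn (extFn w a (a+δ₀) hle y.1) ↑t,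
      Φcont y.1 y.2⟩, Φfix_val y.1 y.2⟩
  have hlip : ∀ y y' : S, dist (Φ y) (Φ y') ≤ (1/2 : ℝ) * dist y y' := by
    intro y y'
    rw [Subtype.dist_eq]
    have h0 : (0:ℝ) ≤ 1/2 * dist y y' := by positivity
    rw [ContinuousMap.dist_le h0]
    intro t
    have hd : ∀ u, ‖extFn w a (a+δ₀) hle y.1 u - extFn w a (a+δ₀) hle y'.1 u‖ ≤ dist y y' := by
      intro u
      by_cases hu : u ≤ a
      · rw [extFn_past w hle _ hu, extFn_past w hle _ hu, sub_self, norm_zero]; exact dist_nonneg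
      · rw [extFn_of_not w hle _ hu, extFn_of_not w hle _ hu, ← dist_eq_norm, Subtype.dist_eq]
        exact ContinuousMap.dist_apply_le_dist _
    have hCBy : CB (extFn w a (a+δ₀) hle y.1) (t:ℝ) :=
      CB.of_continuous (extFn_cont w hle hw y.1 y.2) (extFn_bdd w hle hwb y.1) _
    have hCBy' : CB (extFn w a (a+δ₀) hle y'.1) (t:ℝ) :=
      CB.of_continuous (extFn_cont w hle hw y'.1 y'.2) (extFn_bdd w hle hwb y'.1) _
    have hsub := IP_sub (νp := νp) (νn := νn) hν hCBy hCBy'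
    have hCBsub : CB (fun u => extFn w a (a+δ₀) hle y.1 u - extFn w a (a+δ₀) hle y'.1 u) (t:ℝ) := by
      refine CB.of_continuous ((extFn_cont w hle hw y.1 y.2).sub (extFn_cont w hle hw y'.1 y'.2))
        ⟨dist y y', fun u => hd u⟩ _
    have hIPb := norm_IP_le hν hCBsub hδ₀ le_rfl dist_nonneg
      (fun u hu => by
        have hua : u ≤ a := by
          have h2 := t.2.2
          linarith
        rw [extFn_past w hle _ hua, extFn_past w hle _ hua, sub_self, norm_zero])
      (fun u _ _ => hd u)
    rw [dist_eq_norm]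
    show ‖(g ↑t + IP νp νn (extFn w a (a+δ₀) hle y.1) ↑t) -
      (g ↑t + IP νp νn (extFn w a (a+δ₀) hle y'.1) ↑t)‖ ≤ _
    have heq : (g ↑t + IP νp νn (extFn w a (a+δ₀) hle y.1) ↑t) -
        (g ↑t + IP νp νn (extFn w a (a+δ₀) hle y'.1) ↑t) =
        IP νp νn (fun u => extFn w a (a+δ₀) hle y.1 u - extFn w a (a+δ₀) hle y'.1 u) (t:ℝ) := by
      rw [hsub]; funext i; simp
    rw [heq, pi_norm_le_iff_of_nonneg h0]
    intro i
    rw [Real.norm_eq_abs]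
    calc |IP νp νn (fun u => extFn w a (a+δ₀) hle y.1 u - extFn w a (a+δ₀) hle y'.1 u) (↑t) i| ≤
        Mtot νp νn * 0 + qmass νp νn δ₀ * dist y y' := hIPb i
      _ ≤ 1/2 * dist y y' := by
          rw [mul_zero, zero_add]
          exact mul_le_mul_of_nonneg_right (le_of_lt hq) dist_nonneg
  have hcontr : ContractingWith (1/2 : ℝ≥0) Φ := by
    constructor
    · rw [← NNReal.coe_lt_coe]
      norm_num
    · apply LipschitzWith.of_dist_le_mul
      intro y y'
      have := hlip y y'
      simpa using this
  set ystar := hcontr.fixedPoint Φ with hystar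
  have hfix : Φ ystar = ystar := hcontr.fixedPoint_isFixedPt
  refine ⟨extFn w a (a+δ₀) hle ystar.1, extFn_cont w hle hw ystar.1 ystar.2,
    fun t ht => extFn_past w hle _ ht, extFn_bdd w hle hwb ystar.1, ?_⟩
  intro t ht
  have hval : extFn w a (a+δ₀) hle ystar.1 t =
      g t + IP νp νn (extFn w a (a+δ₀) hle ystar.1) t := by
    rw [extFn_mem w hle ystar.1 ystar.2 ht]
    conv_lhs => rw [← hfix]
    rfl
  rw [Dop_shift]
  funext i
  have h3 := congrFun hval i
  simp only [Pi.add_apply] at h3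
  rw [h3]
  ring
end S7c

section S7d
open MeasureTheory Set Filter
open scoped NNReal ENNReal

variable {m : ℕ} {νp νn : Fin m → Fin m → Measure ℝ}

lemma unique_on (hν : NuCond m νp νn) {δ₀ : ℝ} (hδ₀ : 0 < δ₀) (hq : qmass νp νn δ₀ < 1/2)
    {w₁ w₂ : ℝ → Fin m → ℝ} {b : ℝ}
    (h₁ : Continuous w₁) (hb₁ : ∃ C, ∀ t ≤ b, ‖w₁ t‖ ≤ C)
    (h₂ : Continuous w₂) (hb₂ : ∃ C, ∀ t ≤ b, ‖w₂ t‖ ≤ C)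
    (hpast : ∀ t ≤ (0:ℝ), w₁ t = w₂ t)
    (heq : ∀ t, 0 ≤ t → t ≤ b → Dop m νp νn (shift m w₁ t) = Dop m νp νn (shift m w₂ t)) :
    ∀ t ≤ b, w₁ t = w₂ t := by
  obtain ⟨C₁, hC₁⟩ := hb₁
  obtain ⟨C₂, hC₂⟩ := hb₂
  set B : ℝ := C₁ + C₂ with hB
  set e : ℝ → Fin m → ℝ := fun u => w₁ u - w₂ u with he
  have he_bdd : ∀ u ≤ b, ‖e u‖ ≤ B :=
    fun u hu => le_trans (norm_sub_le _ _) (add_le_add (hC₁ u hu) (hC₂ u hu))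
  have hB0 : 0 ≤ B := le_trans (norm_nonneg (e b)) (he_bdd b le_rfl)
  have hCB1 : ∀ t ≤ b, CB w₁ t := fun t ht =>
    ⟨h₁.continuousOn, C₁, fun u hu => hC₁ u (le_trans hu ht)⟩
  have hCB2 : ∀ t ≤ b, CB w₂ t := fun t ht =>
    ⟨h₂.continuousOn, C₂, fun u hu => hC₂ u (le_trans hu ht)⟩
  have hCBe : ∀ t ≤ b, CB e t := fun t ht =>
    ⟨(h₁.sub h₂).continuousOn, B, fun u hu => he_bdd u (le_trans hu ht)⟩
  have heD : ∀ t, 0 ≤ t → t ≤ b → Dop m νp νn (shift m e t) = 0 := by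
    intro t ht htb
    rw [Dop_shift_sub hν (hCB1 t htb) (hCB2 t htb), heq t ht htb]
    funext i
    simp
  have hq0 : 0 ≤ qmass νp νn δ₀ := qmass_nonneg δ₀
  have hkey : ∀ k : ℕ, ∀ t, t ≤ (k:ℝ)*δ₀ → t ≤ b → e t = 0 := by
    intro k
    induction k with
    | zero =>
      intro t ht htb
      rw [Nat.cast_zero, zero_mul] at ht
      rw [he]
      simp only [hpast t ht, sub_self]
    | succ k ih =>
      have hj : ∀ j : ℕ, ∀ t, t ≤ ((k:ℝ)+1)*δ₀ → t ≤ b → ‖e t‖ ≤ (qmass νp νn δ₀)^j * B := by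
        intro j
        induction j with
        | zero =>
          intro t _ htb
          rw [pow_zero, one_mul]
          exact he_bdd t htb
        | succ j ihj =>
          intro t ht htb
          by_cases htk : t ≤ (k:ℝ)*δ₀
          · rw [ih t htk htb, norm_zero]
            positivity
          · push_neg at htk
            have ht0 : 0 ≤ t := le_trans (by positivity) htk.le
            have hPE := PE hν (hCBe t htb) hδ₀ (le_refl (0:ℝ))
              (show 0 ≤ (qmass νp νn δ₀)^j * B by positivity)
              (show ‖Dop m νp νn (shift m e t)‖ ≤ 0 by rw [heD t ht0 htb]; simp)
              (fun u hu => by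
                rw [ih u (by push_cast at ht ⊢; linarith) (by linarith), norm_zero])
              (fun u hu1 hu2 => ihj u (by linarith) (by linarith))
            calc ‖e t‖ ≤ 0 + Mtot νp νn * 0 + qmass νp νn δ₀ * ((qmass νp νn δ₀)^j * B) := hPE
              _ = (qmass νp νn δ₀)^(j+1) * B := by ring
      intro t ht htb
      have hlim : Tendsto (fun j : ℕ => (qmass νp νn δ₀)^j * B) atTop (nhds 0) := by
        have h1 : Tendsto (fun j : ℕ => (qmass νp νn δ₀)^j) atTop (nhds 0) := by
          apply tendsto_pow_atTop_nhds_zero_of_lt_one hq0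
          linarith
        have := h1.mul_const B
        simpa using this
      have hle0 : ‖e t‖ ≤ 0 :=
        ge_of_tendsto hlim (Eventually.of_forall fun j => hj j t (by push_cast at ht; linarith) htb)
      rw [← norm_eq_zero]
      exact le_antisymm hle0 (norm_nonneg _)
  intro t htb
  obtain ⟨k, hk⟩ := exists_nat_ge (t/δ₀)
  have htk : t ≤ (k:ℝ)*δ₀ := by
    rw [div_le_iff₀ hδ₀] at hk
    linarith
  funext i
  have h2 := congrFun (hkey k t htk htb) i
  simp only [he, Pi.sub_apply, Pi.zero_apply, sub_eq_zero] at h2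
  exact h2

lemma exists_solution (hν : NuCond m νp νn) {δ₀ : ℝ} (hδ₀ : 0 < δ₀)
    (hq : qmass νp νn δ₀ < 1/2) {φ g : ℝ → Fin m → ℝ}
    (hφ : CB φ 0) (hg : Continuous g)
    (hcompat : Dop m νp νn φ = g 0) :
    ∃ x : ℝ → Fin m → ℝ, Continuous x ∧ (∀ t ≤ (0:ℝ), x t = φ t) ∧
      (∀ b : ℝ, ∃ C, ∀ t ≤ b, ‖x t‖ ≤ C) ∧ ∀ t, 0 ≤ t → Dop m νp νn (shift m x t) = g t := by
  have main : ∀ n : ℕ, ∃ w : ℝ → Fin m → ℝ, Continuous w ∧ (∀ t ≤ (0:ℝ), w t = φ t) ∧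
      (∃ C, ∀ t, ‖w t‖ ≤ C) ∧ ∀ t ∈ Icc (0:ℝ) ((n:ℝ)*δ₀), Dop m νp νn (shift m w t) = g t := by
    intro n
    induction n with
    | zero =>
      refine ⟨fun t => φ (min t 0), ?_, ?_, ?_, ?_⟩
      · exact hφ.1.comp_continuous (continuous_id.min continuous_const)
          (fun t => mem_Iic.2 (min_le_right t 0))
      · intro t ht; show φ (min t 0) = φ t; rw [min_eq_left ht]
      · obtain ⟨C, hC⟩ := hφ.2
        exact ⟨C, fun t => hC _ (min_le_right t 0)⟩
      · intro t ht
        rw [Nat.cast_zero, zero_mul] at ht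
        have ht0 : t = 0 := le_antisymm ht.2 ht.1
        subst ht0
        have hcongr : Dop m νp νn (shift m (fun t => φ (min t 0)) 0) =
            Dop m νp νn (shift m φ 0) :=
          Dop_shift_congr (fun u hu => by rw [min_eq_left hu])
        rw [hcongr, show shift m φ 0 = φ from funext fun u => by simp [shift]]
        exact hcompat
    | succ n ih =>
      obtain ⟨w, hwc, hwp, hwb, hweq⟩ := ih
      have ha : Dop m νp νn (shift m w ((n:ℝ)*δ₀)) = g ((n:ℝ)*δ₀) :=
        hweq _ ⟨by positivity, le_rfl⟩
      obtain ⟨w', hw'c, hw'p, hw'b, hw'eq⟩ := step_exists hν hδ₀ hq hg hwc hwb _ ha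
      have h0a : (0:ℝ) ≤ (n:ℝ)*δ₀ := by positivity
      refine ⟨w', hw'c, fun t ht => by rw [hw'p t (le_trans ht h0a), hwp t ht], hw'b, ?_⟩
      intro t ht
      by_cases htn : t ≤ (n:ℝ)*δ₀
      · have hcongr : Dop m νp νn (shift m w' t) = Dop m νp νn (shift m w t) :=
          Dop_shift_congr (fun u hu => hw'p u (le_trans hu htn))
        rw [hcongr]
        exact hweq t ⟨ht.1, htn⟩
      · push_neg at htn
        apply hw'eq
        constructor
        · exact htn.le
        · have := ht.2
          push_cast at this
          linarith
  classical
  choose W hWc hWp hWb hWeq using main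
  have agree : ∀ n k : ℕ, n ≤ k → ∀ t, t ≤ (n:ℝ)*δ₀ → W n t = W k t := by
    intro n k hnk
    have hmono : (n:ℝ)*δ₀ ≤ (k:ℝ)*δ₀ :=
      mul_le_mul_of_nonneg_right (Nat.cast_le.2 hnk) hδ₀.le
    apply unique_on hν hδ₀ hq (hWc n)
      ((hWb n).imp fun C hC => fun t _ => hC t) (hWc k)
      ((hWb k).imp fun C hC => fun t _ => hC t)
      (fun t ht => by rw [hWp n t ht, hWp k t ht])
    intro t ht htn
    rw [hWeq n t ⟨ht, htn⟩, hWeq k t ⟨ht, le_trans htn hmono⟩]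
  set N : ℝ → ℕ := fun t => ⌈(max t 0) / δ₀⌉₊ with hN
  have hNle : ∀ t : ℝ, t ≤ ((N t : ℝ))*δ₀ := by
    intro t
    have h1 : (max t 0) / δ₀ ≤ (N t : ℝ) := Nat.le_ceil _
    rw [div_le_iff₀ hδ₀] at h1
    calc t ≤ max t 0 := le_max_left _ _
      _ ≤ _ := h1
  set x : ℝ → Fin m → ℝ := fun t => W (N t) t with hx
  have bridge : ∀ t (n : ℕ), t ≤ (n:ℝ)*δ₀ → x t = W n t := by
    intro t n htn
    rcases le_total (N t) n with h | h
    · exact agree (N t) n h t (hNle t)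
    · exact (agree n (N t) h t htn).symm
  have hxc : Continuous x := by
    rw [continuous_iff_continuousAt]
    intro t₀
    obtain ⟨n, hn⟩ := exists_nat_gt (t₀/δ₀)
    rw [div_lt_iff₀ hδ₀] at hn
    apply ((hWc n).continuousAt).congr
    apply Filter.eventuallyEq_of_mem (Iio_mem_nhds hn)
    intro u hu
    exact (bridge u n (le_of_lt hu)).symm
  refine ⟨x, hxc, ?_, ?_, ?_⟩
  · intro t ht
    rw [bridge t 0 (by rw [Nat.cast_zero, zero_mul]; exact ht), hWp 0 t ht]
  · intro b
    obtain ⟨n, hn⟩ := exists_nat_ge (b/δ₀)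
    rw [div_le_iff₀ hδ₀] at hn
    obtain ⟨C, hC⟩ := hWb n
    exact ⟨C, fun t ht => by rw [bridge t n (by linarith)]; exact hC t⟩
  · intro t ht
    obtain ⟨n, hn⟩ := exists_nat_ge (t/δ₀)
    rw [div_le_iff₀ hδ₀] at hn
    have htn : t ≤ (n:ℝ)*δ₀ := by linarith
    have hcongr : Dop m νp νn (shift m x t) = Dop m νp νn (shift m (W n) t) :=
      Dop_shift_congr (fun u hu => bridge u n (le_trans hu htn))
    rw [hcongr]
    exact hWeq n t ⟨ht, htn⟩
end S7d

section S7e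
open MeasureTheory Set Filter
open scoped NNReal ENNReal

variable {m : ℕ} {νp νn : Fin m → Fin m → Measure ℝ}

instance : Nonempty (Set.Iic (0:ℝ)) := ⟨⟨0, Set.self_mem_Iic⟩⟩

lemma supNorm_le {x : ℝ → Fin m → ℝ} {C : ℝ} (h : ∀ s ≤ (0:ℝ), ‖x s‖ ≤ C) :
    supNorm m x ≤ C :=
  ciSup_le fun s => h s s.2

lemma le_supNorm {x : ℝ → Fin m → ℝ} (hb : ∃ C, ∀ s ≤ (0:ℝ), ‖x s‖ ≤ C)
    {s : ℝ} (hs : s ≤ 0) : ‖x s‖ ≤ supNorm m x := by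
  obtain ⟨C, hC⟩ := hb
  exact le_ciSup (f := fun s : Set.Iic (0:ℝ) => ‖x (s:ℝ)‖)
    ⟨C, by rintro y ⟨u, rfl⟩; exact hC u u.2⟩ ⟨s, hs⟩

lemma supNorm_nonneg {x : ℝ → Fin m → ℝ} (hb : ∃ C, ∀ s ≤ (0:ℝ), ‖x s‖ ≤ C) :
    0 ≤ supNorm m x :=
  le_trans (norm_nonneg (x 0)) (le_supNorm hb le_rfl)

lemma supNorm_const (v : Fin m → ℝ) : supNorm m (fun _ => v) = ‖v‖ := ciSup_const

lemma IsBU.continuousOn {x : ℝ → Fin m → ℝ} (h : IsBU m x) :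
    ContinuousOn x (Iic 0) := by
  intro s hs
  rw [Metric.continuousWithinAt_iff]
  intro ε hε
  obtain ⟨δ, hδ, huc⟩ := h.2 ε hε
  refine ⟨δ, hδ, fun {u} hu hdist => ?_⟩
  rw [dist_eq_norm]
  rw [Real.dist_eq] at hdist
  exact huc u hu s hs hdist

lemma IsBU.cb {x : ℝ → Fin m → ℝ} (h : IsBU m x) : CB x 0 :=
  ⟨h.continuousOn, h.1.imp fun C hC t ht => hC t ht⟩

/-- `1 - A` is invertible, with inverse bounded by `c₀`. -/
lemma const_inverse (hν : NuCond m νp νn) (hst : IsStableOp m (Dop m νp νn)) :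
    ∃ c₀ : ℝ, 0 ≤ c₀ ∧ ∀ v : Fin m → ℝ, ∃ ψ : Fin m → ℝ,
      Dop m νp νn (fun _ => ψ) = v ∧ ‖ψ‖ ≤ c₀ * ‖v‖ := by
  obtain ⟨c, hcc, hcpos, hcten, hcst⟩ := hst
  let L : (Fin m → ℝ) →ₗ[ℝ] (Fin m → ℝ) :=
    { toFun := fun v => fun i => v i - ∑ j, Amat νp νn i j * v j
      map_add' := by
        intro v w
        funext i
        simp only [Pi.add_apply, mul_add]
        rw [Finset.sum_add_distrib]
        ring
      map_smul' := by
        intro r v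
        funext i
        simp only [Pi.smul_apply, smul_eq_mul, RingHom.id_apply]
        rw [mul_sub, Finset.mul_sum]
        congr 1
        exact Finset.sum_congr rfl fun j _ => by ring }
  have hker : ∀ v, L v = 0 → v = 0 := by
    intro v hv0
    by_contra hne
    have hvpos : 0 < ‖v‖ := norm_pos_iff.2 hne
    have hbu : IsBU m (fun _ : ℝ => v) := ⟨⟨‖v‖, fun _ _ => le_rfl⟩,
      fun ε hε => ⟨1, one_pos, fun s _ s' _ _ => by simpa using hε⟩⟩
    have heq : ∀ t : ℝ, 0 ≤ t → Dop m νp νn (shift m (fun _ => v) t) = 0 := by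
      intro t _
      have h1 : shift m (fun _ : ℝ => v) t = fun _ => v := rfl
      rw [h1, Dop_const]
      exact hv0
    have hb := hcst (fun _ => v) continuous_const hbu heq
    have hev : ∀ᶠ t : ℝ in atTop, c t < 1 := hcten.eventually (eventually_lt_nhds one_pos)
    obtain ⟨t, ht1, ht0⟩ := (hev.and (eventually_ge_atTop 0)).exists
    have hb2 := hb t ht0
    rw [supNorm_const] at hb2
    have : ‖v‖ < ‖v‖ :=
      lt_of_le_of_lt hb2 (by calc c t * ‖v‖ < 1 * ‖v‖ := mul_lt_mul_of_pos_right ht1 hvpos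
        _ = ‖v‖ := one_mul _)
    exact lt_irrefl _ this
  have hLinj : Function.Injective L := LinearMap.ker_eq_bot.1 (LinearMap.ker_eq_bot'.2 hker)
  have hLsurj : Function.Surjective L := (LinearMap.injective_iff_surjective).1 hLinj
  let Leq := LinearEquiv.ofBijective L ⟨hLinj, hLsurj⟩
  let Linv : (Fin m → ℝ) →L[ℝ] (Fin m → ℝ) :=
    LinearMap.toContinuousLinearMap (Leq.symm : (Fin m → ℝ) →ₗ[ℝ] (Fin m → ℝ))
  refine ⟨‖Linv‖, norm_nonneg _, fun v => ⟨Leq.symm v, ?_, ?_⟩⟩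
  · rw [Dop_const]
    exact Leq.apply_symm_apply v
  · have hco : Linv v = Leq.symm v := by
      simp only [Linv, LinearMap.coe_toContinuousLinearMap']
      rfl
    calc ‖(Leq.symm v : Fin m → ℝ)‖ = ‖Linv v‖ := by rw [hco]
      _ ≤ ‖Linv‖ * ‖v‖ := Linv.le_opNorm v

/-- crude growth bound by stepping. -/
lemma crude (hν : NuCond m νp νn) {δ₀ : ℝ} (hδ₀ : 0 < δ₀) (hq : qmass νp νn δ₀ < 1/2) :
    ∀ (n : ℕ) (x : ℝ → Fin m → ℝ) (σ b G P : ℝ), 0 ≤ G → 0 ≤ P →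
    b ≤ σ + (n:ℝ)*δ₀ → CB x b →
    (∀ u ≤ σ, ‖x u‖ ≤ P) →
    (∀ u, σ ≤ u → u ≤ b → ‖Dop m νp νn (shift m x u)‖ ≤ G) →
    ∀ t, σ ≤ t → t ≤ b → ‖x t‖ ≤ (2*Mtot νp νn + 2)^n * (P + 2*G) := by
  have hM := Mtot_nonneg (νp := νp) (νn := νn)
  have hq0 := qmass_nonneg (νp := νp) (νn := νn) δ₀
  have hbase : (1:ℝ) ≤ 2*Mtot νp νn + 2 := by linarith
  intro n
  induction n with
  | zero =>
    intro x σ b G P hG hP hb hx hpast heq t hσt htb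
    rw [Nat.cast_zero, zero_mul, add_zero] at hb
    rw [pow_zero, one_mul]
    calc ‖x t‖ ≤ P := hpast t (le_trans htb hb)
      _ ≤ P + 2*G := by linarith
  | succ n ih =>
    intro x σ b G P hG hP hb hx hpast heq t hσt htb
    have hRn0 : 0 ≤ (2*Mtot νp νn + 2)^n * (P + 2*G) := by positivity
    have hRmono : (2*Mtot νp νn + 2)^n * (P + 2*G) ≤ (2*Mtot νp νn + 2)^(n+1) * (P + 2*G) := by
      apply mul_le_mul_of_nonneg_right _ (by linarith)
      exact pow_le_pow_right₀ hbase (Nat.le_succ n)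
    set b' : ℝ := min b (σ + (n:ℝ)*δ₀) with hb'
    have hihall : ∀ u, σ ≤ u → u ≤ b' → ‖x u‖ ≤ (2*Mtot νp νn + 2)^n * (P + 2*G) := by
      intro u hu1 hu2
      exact ih x σ b' G P hG hP (min_le_right _ _) (hx.mono (min_le_left _ _))
        hpast (fun u h1 h2 => heq u h1 (le_trans h2 (min_le_left _ _))) u hu1 hu2
    have hpast' : ∀ u ≤ b', ‖x u‖ ≤ (2*Mtot νp νn + 2)^n * (P + 2*G) := by
      intro u hu
      by_cases h : u ≤ σ
      · calc ‖x u‖ ≤ P := hpast u h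
          _ ≤ _ := le_trans (by linarith : P ≤ P + 2*G) (le_mul_of_one_le_left (by linarith)
              (one_le_pow₀ hbase))
      · push_neg at h
        exact hihall u h.le hu
    by_cases ht' : t ≤ b'
    · exact le_trans (hpast' t ht') hRmono
    · push_neg at ht'
      have hb'eq : b' = σ + (n:ℝ)*δ₀ := by
        rcases min_cases b (σ + (n:ℝ)*δ₀) with ⟨h1, h2⟩ | ⟨h1, h2⟩
        · exfalso; rw [hb', h1] at ht'; exact absurd htb (not_le.2 ht')
        · rw [hb', h1]
      have hKne : (Icc (σ + (n:ℝ)*δ₀) t).Nonempty := ⟨t, by rw [← hb'eq]; exact ⟨ht'.le, le_rfl⟩⟩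
      have hKcont : ContinuousOn (fun u => ‖x u‖) (Icc (σ + (n:ℝ)*δ₀) t) := by
        apply ContinuousOn.norm
        exact hx.1.mono (fun u hu => le_trans hu.2 htb)
      obtain ⟨ts, hts, hmax⟩ := isCompact_Icc.exists_isMaxOn hKne hKcont
      have htsb : ts ≤ b := le_trans hts.2 htb
      have hσts : σ ≤ ts := by
        have h1 := hts.1
        have h2 : (0:ℝ) ≤ (n:ℝ)*δ₀ := by positivity
        linarith
      have hPE := PE hν (hx.mono htsb) hδ₀ hRn0
        (show 0 ≤ (2*Mtot νp νn + 2)^n * (P + 2*G) + ‖x ts‖ by positivity)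
        (heq ts hσts htsb)
        (fun u hu => by
          apply hpast'
          have : t ≤ b := htb
          have h2 : t ≤ σ + ((n:ℝ)+1)*δ₀ := by
            have := hb; push_cast at this; linarith
          rw [hb'eq]
          have : ts ≤ t := hts.2
          linarith)
        (fun u hu1 hu2 => by
          by_cases h : u ≤ b'
          · calc ‖x u‖ ≤ (2*Mtot νp νn + 2)^n * (P + 2*G) := hpast' u h
              _ ≤ _ := le_add_of_nonneg_right (norm_nonneg _)
          · push_neg at h
            have humem : u ∈ Icc (σ + (n:ℝ)*δ₀) t := by
              rw [hb'eq] at h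
              exact ⟨h.le, le_trans hu2 hts.2⟩
            calc ‖x u‖ ≤ ‖x ts‖ := hmax humem
              _ ≤ _ := le_add_of_nonneg_left hRn0)
      -- now algebra
      set Rn : ℝ := (2*Mtot νp νn + 2)^n * (P + 2*G) with hRn
      have h2G : 2*G ≤ Rn := by
        calc 2*G ≤ P + 2*G := by linarith
          _ ≤ Rn := le_mul_of_one_le_left (by linarith) (one_le_pow₀ hbase)
      have hqhalf : qmass νp νn δ₀ * (Rn + ‖x ts‖) ≤ 1/2 * (Rn + ‖x ts‖) := by
        apply mul_le_mul_of_nonneg_right hq.le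
        positivity
      have hts_bound : ‖x ts‖ ≤ 2*G + (2*Mtot νp νn + 1) * Rn := by
        have := hPE
        nlinarith [norm_nonneg (x ts)]
      have htmem : t ∈ Icc (σ + (n:ℝ)*δ₀) t := ⟨by rw [← hb'eq]; exact ht'.le, le_rfl⟩
      calc ‖x t‖ ≤ ‖x ts‖ := hmax htmem
        _ ≤ 2*G + (2*Mtot νp νn + 1) * Rn := hts_bound
        _ ≤ Rn + (2*Mtot νp νn + 1) * Rn := by linarith
        _ = (2*Mtot νp νn + 2) * Rn := by ring
        _ = (2*Mtot νp νn + 2)^(n+1) * (P + 2*G) := by rw [hRn, pow_succ]; ring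
end S7e

section S7f
open MeasureTheory Set Filter
open scoped NNReal ENNReal

variable {m : ℕ} {νp νn : Fin m → Fin m → Measure ℝ}

lemma Dop_shift_zero_fun (x : ℝ → Fin m → ℝ) :
    Dop m νp νn (shift m x 0) = Dop m νp νn x := by
  rw [show shift m x 0 = x from funext fun u => by simp [shift]]

lemma decomp (hν : NuCond m νp νn) {δ₀ : ℝ} (hδ₀ : 0 < δ₀) (hq : qmass νp νn δ₀ < 1/2)
    {c : ℝ → ℝ} (hcpos : ∀ t, 0 ≤ t → 0 ≤ c t)
    (hcst : ∀ x : ℝ → Fin m → ℝ, Continuous x → IsBU m x →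
      (∀ t, 0 ≤ t → Dop m νp νn (shift m x t) = 0) → ∀ t, 0 ≤ t → ‖x t‖ ≤ c t * supNorm m x)
    {c₀ : ℝ} (hc₀ : 0 ≤ c₀)
    (hinv : ∀ v : Fin m → ℝ, ∃ ψ, Dop m νp νn (fun _ => ψ) = v ∧ ‖ψ‖ ≤ c₀ * ‖v‖)
    {T : ℝ} (hT : 0 < T) :
    ∃ CT : ℝ, 0 ≤ CT ∧
    ∀ (x : ℝ → Fin m → ℝ), IsBU m x →
    ∀ (Bx W : ℝ), (∀ s ≤ (0:ℝ), ‖x s‖ ≤ Bx) →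
    ∀ τ, τ ≤ (0:ℝ) → (∀ s, τ - T ≤ s → s ≤ 0 → ‖Dop m νp νn (shift m x s)‖ ≤ W) →
      ‖x τ‖ ≤ c T * (Bx + c₀ * W) + CT * W + c₀ * W := by
  set n : ℕ := ⌈T/δ₀⌉₊ with hn
  refine ⟨4 * (2*Mtot νp νn + 2)^n,
    mul_nonneg (by norm_num) (pow_nonneg (by linarith [Mtot_nonneg (νp:=νp) (νn:=νn)]) n), ?_⟩
  intro x hxbu Bx W hBx τ hτ hW
  set σ : ℝ := τ - T with hσ
  have hσ0 : σ ≤ 0 := by simp only [hσ]; linarith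
  have hW0 : 0 ≤ W := le_trans (norm_nonneg _) (hW τ (by simp only [hσ]; linarith) hτ)
  have hBx0 : 0 ≤ Bx := le_trans (norm_nonneg _) (hBx 0 le_rfl)
  obtain ⟨ψ, hψD, hψn⟩ := hinv (Dop m νp νn (shift m x σ))
  have hvW : ‖Dop m νp νn (shift m x σ)‖ ≤ W := hW σ (by simp only [hσ]; linarith) hσ0
  have hψW : ‖ψ‖ ≤ c₀ * W := le_trans hψn (mul_le_mul_of_nonneg_left hvW hc₀)
  set φU : ℝ → Fin m → ℝ := fun s => x (σ + s) - ψ with hφU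
  have hxcont := hxbu.continuousOn
  have hFc : ContinuousOn (fun s => x (σ + s)) (Iic (0:ℝ)) := by
    apply hxcont.comp (continuous_const.add continuous_id).continuousOn
    intro s hs
    simp only [mem_Iic, id, Pi.add_apply] at hs ⊢
    linarith
  have hFCB : CB (fun s => x (σ + s)) 0 :=
    ⟨hFc, Bx, fun t ht => hBx _ (by linarith)⟩
  have hφUb : ∀ s ≤ (0:ℝ), ‖φU s‖ ≤ Bx + c₀ * W := by
    intro s hs
    calc ‖x (σ + s) - ψ‖ ≤ ‖x (σ+s)‖ + ‖ψ‖ := norm_sub_le _ _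
      _ ≤ Bx + c₀ * W := add_le_add (hBx _ (by linarith)) hψW
  have hφUCB : CB φU 0 := ⟨hFc.sub continuousOn_const, Bx + c₀*W, hφUb⟩
  have hψCB : CB (fun _ : ℝ => ψ) 0 :=
    CB.of_continuous continuous_const ⟨‖ψ‖, fun _ => le_rfl⟩ _
  have hcompat : Dop m νp νn φU = (fun _ : ℝ => (0 : Fin m → ℝ)) 0 := by
    have h1 : Dop m νp νn (shift m φU 0) =
        fun i => Dop m νp νn (shift m (fun s => x (σ + s)) 0) i -
          Dop m νp νn (shift m (fun _ : ℝ => ψ) 0) i :=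
      Dop_shift_sub hν hFCB hψCB
    rw [Dop_shift_zero_fun, Dop_shift_zero_fun, Dop_shift_zero_fun] at h1
    rw [h1]
    have h2 : Dop m νp νn (fun s : ℝ => x (σ + s)) = Dop m νp νn (shift m x σ) := rfl
    rw [h2, hψD]
    funext i
    simp
  obtain ⟨X, hXc, hXp, hXb, hXeq⟩ := exists_solution hν hδ₀ hq hφUCB continuous_const hcompat
  have hXbu : IsBU m X := by
    constructor
    · exact ⟨Bx + c₀*W, fun s hs => by rw [hXp s hs]; exact hφUb s hs⟩
    · intro ε hε
      obtain ⟨δ, hδ, huc⟩ := hxbu.2 ε hε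
      refine ⟨δ, hδ, fun s hs s' hs' hss => ?_⟩
      rw [hXp s hs, hXp s' hs']
      have he : φU s - φU s' = x (σ + s) - x (σ + s') := by
        simp only [hφU]
        abel
      rw [he]
      apply huc (σ+s) (by linarith) (σ+s') (by linarith)
      have : σ + s - (σ + s') = s - s' := by ring
      rw [this]
      exact hss
  have hXT := hcst X hXc hXbu (fun t ht => hXeq t ht) T hT.le
  have hXsup : supNorm m X ≤ Bx + c₀ * W :=
    supNorm_le (fun s hs => by rw [hXp s hs]; exact hφUb s hs)
  have hXTb : ‖X T‖ ≤ c T * (Bx + c₀ * W) :=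
    le_trans hXT (mul_le_mul_of_nonneg_left hXsup (hcpos T hT.le))
  set Y : ℝ → Fin m → ℝ := fun u => X (u - σ) with hY
  have hYeq : ∀ u, σ ≤ u → Dop m νp νn (shift m Y u) = 0 := by
    intro u hu
    have h1 : shift m Y u = shift m X (u - σ) :=
      funext fun s => congrArg X (by ring)
    rw [h1]
    exact hXeq (u - σ) (by linarith)
  obtain ⟨CX, hCX⟩ := hXb T
  have hcbY : CB Y τ := by
    refine ⟨(hXc.comp (continuous_id.sub continuous_const)).continuousOn, CX, fun w hw => ?_⟩
    exact hCX _ (by simp only [hσ] at *; linarith)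
  set vf : ℝ → Fin m → ℝ := fun u => (x u - Y u) - ψ with hvf
  have hcbx : CB x τ := hxbu.cb.mono hτ
  have hcbxY : CB (fun w => x w - Y w) τ := by
    obtain ⟨C1, hC1⟩ := hcbx.2
    obtain ⟨C2, hC2⟩ := hcbY.2
    exact ⟨hcbx.1.sub hcbY.1, C1 + C2, fun w hw =>
      le_trans (norm_sub_le _ _) (add_le_add (hC1 w hw) (hC2 w hw))⟩
  have hcbvf : CB vf τ := by
    obtain ⟨C1, hC1⟩ := hcbxY.2
    exact ⟨hcbxY.1.sub continuousOn_const, C1 + ‖ψ‖, fun w hw =>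
      le_trans (norm_sub_le _ _) (add_le_add (hC1 w hw) le_rfl)⟩
  have hvfeq : ∀ u, σ ≤ u → u ≤ τ → ‖Dop m νp νn (shift m vf u)‖ ≤ 2*W := by
    intro u hu1 hu2
    have h1 := Dop_shift_sub hν (hcbxY.mono hu2) ((hψCB.mono (le_trans hu2 hτ)))
      (x := fun w => x w - Y w) (y := fun _ => ψ) (t := u)
    have h2 := Dop_shift_sub hν (hcbx.mono hu2) (hcbY.mono hu2) (t := u)
    have h3 : shift m (fun _ : ℝ => ψ) u = fun _ => ψ := rfl
    have h4 : Dop m νp νn (shift m vf u) =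
        fun i => Dop m νp νn (shift m x u) i - Dop m νp νn (shift m x σ) i := by
      rw [show shift m vf u = shift m (fun w => (fun w => x w - Y w) w - (fun _ => ψ) w) u from rfl]
      rw [h1, h2, hYeq u hu1, h3, hψD]
      funext i
      simp
    rw [h4]
    have h5 : ‖(fun i => Dop m νp νn (shift m x u) i - Dop m νp νn (shift m x σ) i)‖ =
        ‖Dop m νp νn (shift m x u) - Dop m νp νn (shift m x σ)‖ := rfl
    rw [h5]
    calc ‖Dop m νp νn (shift m x u) - Dop m νp νn (shift m x σ)‖ ≤
        ‖Dop m νp νn (shift m x u)‖ + ‖Dop m νp νn (shift m x σ)‖ := norm_sub_le _ _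
      _ ≤ W + W := add_le_add (hW u (by simp only [hσ] at *; linarith) (by linarith)) hvW
      _ = 2*W := by ring
  have hvfpast : ∀ u ≤ σ, ‖vf u‖ ≤ 0 := by
    intro u hu
    have h1 : vf u = 0 := by
      simp only [hvf, hY]
      rw [hXp (u-σ) (by linarith)]
      simp only [hφU]
      have h2 : σ + (u - σ) = u := by ring
      rw [h2]
      abel
    rw [h1, norm_zero]
  have hτσn : τ ≤ σ + (n:ℝ)*δ₀ := by
    have h1 : T/δ₀ ≤ (n:ℝ) := Nat.le_ceil _
    rw [div_le_iff₀ hδ₀] at h1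
    simp only [hσ]
    linarith
  have hvτ := crude hν hδ₀ hq n vf σ τ (2*W) 0 (by linarith) le_rfl hτσn hcbvf hvfpast hvfeq
    τ (by simp only [hσ]; linarith) le_rfl
  have hxτ : x τ = vf τ + X T + ψ := by
    simp only [hvf, hY]
    have h2 : τ - σ = T := by simp only [hσ]; ring
    rw [h2]
    abel
  rw [hxτ]
  calc ‖vf τ + X T + ψ‖ ≤ ‖vf τ‖ + ‖X T‖ + ‖ψ‖ := norm_add₃_le
    _ ≤ (2*Mtot νp νn + 2)^n * (0 + 2*(2*W)) + c T * (Bx + c₀ * W) + c₀ * W :=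
        add_le_add (add_le_add hvτ hXTb) hψW
    _ = c T * (Bx + c₀ * W) + (4 * (2*Mtot νp νn + 2)^n) * W + c₀ * W := by ring

lemma ML (hν : NuCond m νp νn) {δ₀ : ℝ} (hδ₀ : 0 < δ₀) (hq : qmass νp νn δ₀ < 1/2)
    {c : ℝ → ℝ} (hcpos : ∀ t, 0 ≤ t → 0 ≤ c t) (hcten : Tendsto c atTop (nhds 0))
    (hcst : ∀ x : ℝ → Fin m → ℝ, Continuous x → IsBU m x →
      (∀ t, 0 ≤ t → Dop m νp νn (shift m x t) = 0) → ∀ t, 0 ≤ t → ‖x t‖ ≤ c t * supNorm m x)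
    {c₀ : ℝ} (hc₀ : 0 ≤ c₀)
    (hinv : ∀ v : Fin m → ℝ, ∃ ψ, Dop m νp νn (fun _ => ψ) = v ∧ ‖ψ‖ ≤ c₀ * ‖v‖) :
    ∃ K : ℝ, 0 < K ∧ ∀ (x : ℝ → Fin m → ℝ) (G : ℝ), 0 ≤ G → IsBU m x →
      (∀ s ≤ (0:ℝ), ‖Dop m νp νn (shift m x s)‖ ≤ G) → ∀ τ, τ ≤ (0:ℝ) → ‖x τ‖ ≤ K * G := by
  have hev := (hcten.eventually (eventually_lt_nhds (show (0:ℝ) < 1/2 by norm_num))).and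
    (eventually_ge_atTop (1:ℝ))
  obtain ⟨T, hT12, hT1⟩ := hev.exists
  have hT : (0:ℝ) < T := lt_of_lt_of_le one_pos hT1
  obtain ⟨CT, hCT0, hdec⟩ := decomp hν hδ₀ hq hcpos hcst hc₀ hinv hT
  refine ⟨3*c₀ + 2*CT + 1, by positivity, ?_⟩
  intro x G hG hxbu hDx τ hτ
  have hbdd : ∃ C, ∀ s ≤ (0:ℝ), ‖x s‖ ≤ C := hxbu.1.imp fun C hC => fun s hs => hC s hs
  have hBxpt : ∀ s ≤ (0:ℝ), ‖x s‖ ≤ supNorm m x := fun s hs => le_supNorm hbdd hs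
  have hstep : ∀ τ', τ' ≤ (0:ℝ) →
      ‖x τ'‖ ≤ c T * (supNorm m x + c₀*G) + CT*G + c₀*G := fun τ' hτ' =>
    hdec x hxbu (supNorm m x) G hBxpt τ' hτ' (fun s _ hs2 => hDx s hs2)
  have hsup : supNorm m x ≤ c T * (supNorm m x + c₀*G) + CT*G + c₀*G :=
    supNorm_le (fun s hs => hstep s hs)
  have hBx0 : 0 ≤ supNorm m x := supNorm_nonneg hbdd
  have hc₀G : 0 ≤ c₀ * G := mul_nonneg hc₀ hG
  have h1 : c T * (supNorm m x + c₀*G) ≤ 1/2 * (supNorm m x + c₀*G) :=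
    mul_le_mul_of_nonneg_right hT12.le (by linarith)
  have hkey : supNorm m x ≤ (3*c₀ + 2*CT) * G := by
    have hCTG : CT * G ≤ CT * G := le_rfl
    nlinarith [hsup, h1]
  calc ‖x τ‖ ≤ supNorm m x := hBxpt τ hτ
    _ ≤ (3*c₀+2*CT)*G := hkey
    _ ≤ (3*c₀+2*CT+1)*G := mul_le_mul_of_nonneg_right (by linarith) hG
end S7f

section S7g
open MeasureTheory Set Filter
open scoped NNReal ENNReal

variable {m : ℕ} {νp νn : Fin m → Fin m → Measure ℝ}

lemma qmass_le_Mtot (hν : NuCond m νp νn) {δ : ℝ} : qmass νp νn δ ≤ Mtot νp νn := by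
  refine Finset.sum_le_sum fun i _ => Finset.sum_le_sum fun j _ => add_le_add ?_ ?_
  · exact ENNReal.toReal_mono (ne_top_of_le_ne_top (hν.1 i j) (measure_mono (subset_univ _)))
      (measure_mono Ioc_subset_Iic_self)
  · exact ENNReal.toReal_mono (ne_top_of_le_ne_top (hν.2.1 i j) (measure_mono (subset_univ _)))
      (measure_mono Ioc_subset_Iic_self)

lemma IsBU.sub {x y : ℝ → Fin m → ℝ} (hx : IsBU m x) (hy : IsBU m y) :
    IsBU m (fun u => x u - y u) := by
  constructor
  · obtain ⟨C1, hC1⟩ := hx.1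
    obtain ⟨C2, hC2⟩ := hy.1
    exact ⟨C1 + C2, fun s hs => le_trans (norm_sub_le _ _) (add_le_add (hC1 s hs) (hC2 s hs))⟩
  · intro ε hε
    obtain ⟨δ1, hδ1, huc1⟩ := hx.2 (ε/2) (by linarith)
    obtain ⟨δ2, hδ2, huc2⟩ := hy.2 (ε/2) (by linarith)
    refine ⟨min δ1 δ2, lt_min hδ1 hδ2, fun s hs s' hs' hss => ?_⟩
    have he : (x s - y s) - (x s' - y s') = (x s - x s') - (y s - y s') := by abel
    rw [he]
    calc ‖(x s - x s') - (y s - y s')‖ ≤ ‖x s - x s'‖ + ‖y s - y s'‖ := norm_sub_le _ _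
      _ < ε/2 + ε/2 := add_lt_add (huc1 s hs s' hs' (lt_of_lt_of_le hss (min_le_left _ _)))
          (huc2 s hs s' hs' (lt_of_lt_of_le hss (min_le_right _ _)))
      _ = ε := by ring

lemma IP_shift_arg (x : ℝ → Fin m → ℝ) (a t : ℝ) :
    IP νp νn (fun u => x (u + a)) t = IP νp νn x (t + a) := by
  funext i
  refine Finset.sum_congr rfl fun j _ => ?_
  have e : ∀ (μ : Measure ℝ), (∫ s in Iic (0:ℝ), x ((t+s)+a) j ∂μ) =
      ∫ s in Iic (0:ℝ), x ((t+a)+s) j ∂μ := by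
    intro μ
    refine MeasureTheory.setIntegral_congr_fun measurableSet_Iic fun s _ => ?_
    rw [show t + s + a = t + a + s from by ring]
  rw [show (∫ s in Iic (0:ℝ), (fun u => x (u+a)) (t+s) j ∂(νp i j)) =
      ∫ s in Iic (0:ℝ), x ((t+s)+a) j ∂(νp i j) from rfl]
  rw [show (∫ s in Iic (0:ℝ), (fun u => x (u+a)) (t+s) j ∂(νn i j)) =
      ∫ s in Iic (0:ℝ), x ((t+s)+a) j ∂(νn i j) from rfl]
  rw [e, e]

/-- Bullet 1 : `D̂` maps `BU` into `BU`. -/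
lemma Dhat_BU (hν : NuCond m νp νn) : ∀ x, IsBU m x → IsBU m (Dhat m νp νn x) := by
  intro x hx
  have hcb := hx.cb
  obtain ⟨C, hC⟩ := hx.1
  have hC0 : 0 ≤ C := le_trans (norm_nonneg _) (hC 0 le_rfl)
  have hM := Mtot_nonneg (νp := νp) (νn := νn)
  constructor
  · refine ⟨C + (Mtot νp νn * C + qmass νp νn 1 * C), fun s hs => ?_⟩
    have hIP := norm_IP_le hν (hcb.mono hs) one_pos hC0 hC0
      (fun u hu => hC u (by linarith)) (fun u _ hu2 => hC u (le_trans hu2 hs))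
    have hnn : 0 ≤ C + (Mtot νp νn * C + qmass νp νn 1 * C) :=
      add_nonneg hC0 (add_nonneg (mul_nonneg hM hC0) (mul_nonneg (qmass_nonneg 1) hC0))
    rw [pi_norm_le_iff_of_nonneg hnn]
    intro i
    have heq : Dhat m νp νn x s i = x s i - IP νp νn x s i := congrFun (Dop_shift x s) i
    rw [Real.norm_eq_abs, heq]
    calc |x s i - IP νp νn x s i| ≤ |x s i| + |IP νp νn x s i| := abs_sub _ _
      _ ≤ C + (Mtot νp νn * C + qmass νp νn 1 * C) := by
          refine add_le_add (le_trans ?_ (hC s hs)) (hIP i)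
          rw [← Real.norm_eq_abs]
          exact norm_le_pi_norm _ i
  · intro ε hε
    have hden : (0:ℝ) < 2 + 2 * Mtot νp νn := by linarith
    have hε'pos : 0 < ε / (2 + 2*Mtot νp νn) := div_pos hε hden
    set ε' := ε / (2 + 2*Mtot νp νn) with hε'
    obtain ⟨δ, hδ, huc⟩ := hx.2 ε' hε'pos
    refine ⟨δ, hδ, fun s hs s' hs' hss => ?_⟩
    set z : ℝ → Fin m → ℝ := fun u => x u - x (u + (s' - s)) with hz
    have hshiftc : ContinuousOn (fun u : ℝ => x (u + (s' - s))) (Iic s) := by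
      apply hcb.1.comp (continuous_id.add continuous_const).continuousOn
      intro u hu
      simp only [mem_Iic, id, Pi.add_apply] at hu ⊢
      linarith
    have hzsmall : ∀ u ≤ s, ‖z u‖ ≤ ε' := by
      intro u hu
      have := huc u (by linarith) (u + (s' - s)) (by linarith)
        (by rw [show u - (u + (s' - s)) = s - s' from by ring]; exact hss)
      exact le_of_lt this
    have hzCB : CB z s := by
      refine ⟨(hcb.1.mono (Iic_subset_Iic.2 hs)).sub hshiftc, ε', fun u hu => hzsmall u hu⟩
    have hIPz := norm_IP_le hν hzCB one_pos hε'pos.le hε'pos.le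
      (fun u hu => hzsmall u (by linarith)) (fun u _ hu2 => hzsmall u hu2)
    have hshiftCB : CB (fun u : ℝ => x (u + (s' - s))) s :=
      ⟨hshiftc, C, fun u hu => hC _ (by linarith)⟩
    have hIPdiff : ∀ i, IP νp νn z s i = IP νp νn x s i - IP νp νn x s' i := by
      intro i
      have h1 := IP_sub hν (hcb.mono hs) hshiftCB
      have h2 : IP νp νn (fun u => x (u + (s'-s))) s = IP νp νn x (s + (s' - s)) :=
        IP_shift_arg x (s' - s) s
      have h3 : s + (s' - s) = s' := by ring
      rw [h3] at h2
      have h4 := congrFun h1 i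
      rw [h2] at h4
      exact h4
    have hbd : ∀ i, |Dhat m νp νn x s i - Dhat m νp νn x s' i| ≤
        ‖x s - x s'‖ + 2 * Mtot νp νn * ε' := by
      intro i
      have e1 : Dhat m νp νn x s i = x s i - IP νp νn x s i := congrFun (Dop_shift x s) i
      have e2 : Dhat m νp νn x s' i = x s' i - IP νp νn x s' i := congrFun (Dop_shift x s') i
      rw [e1, e2]
      have e3 : (x s i - IP νp νn x s i) - (x s' i - IP νp νn x s' i) =
          (x s i - x s' i) - IP νp νn z s i := by rw [hIPdiff i]; ring
      rw [e3]
      calc |(x s i - x s' i) - IP νp νn z s i| ≤ |x s i - x s' i| + |IP νp νn z s i| :=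
            abs_sub _ _
        _ ≤ ‖x s - x s'‖ + 2 * Mtot νp νn * ε' := by
            refine add_le_add ?_ (le_trans (hIPz i) ?_)
            · rw [← Real.norm_eq_abs]
              exact le_trans (norm_le_pi_norm (x s - x s') i) le_rfl
            · have := qmass_le_Mtot hν (δ := (1:ℝ))
              nlinarith [hε'pos.le]
    have hfinal : ‖Dhat m νp νn x s - Dhat m νp νn x s'‖ ≤ ‖x s - x s'‖ + 2*Mtot νp νn*ε' := by
      have hnn : 0 ≤ ‖x s - x s'‖ + 2*Mtot νp νn*ε' :=
        add_nonneg (norm_nonneg _) (by positivity)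
      rw [pi_norm_le_iff_of_nonneg hnn]
      intro i
      rw [Real.norm_eq_abs]
      exact hbd i
    calc ‖Dhat m νp νn x s - Dhat m νp νn x s'‖ ≤ ‖x s - x s'‖ + 2*Mtot νp νn*ε' := hfinal
      _ < ε' + 2*Mtot νp νn*ε' := by
          have := huc s hs s' hs' hss
          linarith
      _ < (2 + 2*Mtot νp νn) * ε' := by nlinarith [hε'pos]
      _ = ε := by
          rw [hε']
          field_simp

/-- Bullet 2 : injectivity, from the master bound. -/
lemma inj_lemma (hν : NuCond m νp νn) {K : ℝ}
    (hML : ∀ (x : ℝ → Fin m → ℝ) (G : ℝ), 0 ≤ G → IsBU m x →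
      (∀ s ≤ (0:ℝ), ‖Dop m νp νn (shift m x s)‖ ≤ G) → ∀ τ, τ ≤ (0:ℝ) → ‖x τ‖ ≤ K * G) :
    ∀ x y : ℝ → Fin m → ℝ, IsBU m x → IsBU m y →
      (∀ s : ℝ, s ≤ 0 → Dhat m νp νn x s = Dhat m νp νn y s) →
      ∀ s : ℝ, s ≤ 0 → x s = y s := by
  intro x y hx hy heq s hs
  set z : ℝ → Fin m → ℝ := fun u => x u - y u with hzdef
  have hzBU : IsBU m z := hx.sub hy
  have hDz : ∀ s ≤ (0:ℝ), ‖Dop m νp νn (shift m z s)‖ ≤ 0 := by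
    intro s hs
    have h1 := Dop_shift_sub hν (hx.cb.mono hs) (hy.cb.mono hs) (t := s)
    have h2 : Dop m νp νn (shift m z s) = 0 := by
      rw [h1]
      funext i
      have := congrFun (heq s hs) i
      simp only [Pi.zero_apply]
      have e1 : Dhat m νp νn x s i = Dop m νp νn (shift m x s) i := rfl
      have e2 : Dhat m νp νn y s i = Dop m νp νn (shift m y s) i := rfl
      rw [e1, e2] at this
      linarith
    rw [h2, norm_zero]
  have := hML z 0 le_rfl hzBU hDz s hs
  rw [mul_zero] at this
  have hz0 : z s = 0 := by
    rw [← norm_eq_zero]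
    exact le_antisymm this (norm_nonneg _)
  have := congrFun hz0
  funext i
  have h3 := this i
  simp only [hzdef, Pi.sub_apply, Pi.zero_apply, sub_eq_zero] at h3
  exact h3
end S7g

section S7h
open MeasureTheory Set Filter
open scoped NNReal ENNReal

variable {m : ℕ} {νp νn : Fin m → Fin m → Measure ℝ}

lemma minc_lip (cst a b : ℝ) : |min a cst - min b cst| ≤ |a - b| := by
  have key : ∀ u v : ℝ, u ≤ v → min v cst - min u cst ≤ v - u := by
    intro u v huv
    rcases le_total v cst with hv | hv
    · rw [min_eq_left hv, min_eq_left (le_trans huv hv)]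
    · rw [min_eq_right hv]
      rcases le_total u cst with hu | hu
      · rw [min_eq_left hu]; linarith
      · rw [min_eq_right hu]; linarith
  rcases le_total a b with hab | hab
  · rw [abs_of_nonpos (sub_nonpos.2 (min_le_min hab le_rfl)),
      abs_of_nonpos (sub_nonpos.2 hab)]
    have := key a b hab; linarith
  · rw [abs_of_nonneg (sub_nonneg.2 (min_le_min hab le_rfl)),
      abs_of_nonneg (sub_nonneg.2 hab)]
    have := key b a hab; linarith

lemma maxc_lip (cst a b : ℝ) : |max a cst - max b cst| ≤ |a - b| := by
  have key : ∀ u v : ℝ, u ≤ v → max v cst - max u cst ≤ v - u := by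
    intro u v huv
    rcases le_total cst u with hu | hu
    · rw [max_eq_left (le_trans hu huv), max_eq_left hu]
    · rw [max_eq_right hu]
      rcases le_total cst v with hv | hv
      · rw [max_eq_left hv]; linarith
      · rw [max_eq_right hv]; linarith
  rcases le_total a b with hab | hab
  · rw [abs_of_nonpos (sub_nonpos.2 (max_le_max hab le_rfl)),
      abs_of_nonpos (sub_nonpos.2 hab)]
    have := key a b hab; linarith
  · rw [abs_of_nonneg (sub_nonneg.2 (max_le_max hab le_rfl)),
      abs_of_nonneg (sub_nonneg.2 hab)]
    have := key b a hab; linarith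

lemma uc_of_zero_past {y : ℝ → Fin m → ℝ} (hy : Continuous y) {a : ℝ}
    (hz : ∀ t ≤ a, y t = 0) :
    ∀ ε > (0:ℝ), ∃ δ > (0:ℝ), ∀ s ≤ (0:ℝ), ∀ s' ≤ (0:ℝ), |s - s'| < δ → ‖y s - y s'‖ < ε := by
  intro ε hε
  rcases le_total 0 (a - 1) with hcase | hcase
  · exact ⟨1, one_pos, fun s hs s' hs' _ => by
      rw [hz s (by linarith), hz s' (by linarith), sub_self, norm_zero]; exact hε⟩
  · have hucK := (isCompact_Icc (a := a - 1) (b := (0:ℝ))).uniformContinuousOn_of_continuous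
      hy.continuousOn
    rw [Metric.uniformContinuousOn_iff] at hucK
    obtain ⟨δ1, hδ1, hK⟩ := hucK ε hε
    refine ⟨min δ1 1, lt_min hδ1 one_pos, fun s hs s' hs' hss => ?_⟩
    by_cases hboth : s ≤ a ∧ s' ≤ a
    · rw [hz s hboth.1, hz s' hboth.2, sub_self, norm_zero]; exact hε
    · have h1 : |s - s'| < 1 := lt_of_lt_of_le hss (min_le_right _ _)
      rw [abs_sub_lt_iff] at h1
      have hsmem : s ∈ Icc (a-1) (0:ℝ) := by
        constructor
        · by_cases h : s ≤ a
          · have h2 : ¬ s' ≤ a := fun hs'a => hboth ⟨h, hs'a⟩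
            push_neg at h2
            linarith [h1.2]
          · push_neg at h; linarith
        · exact hs
      have hs'mem : s' ∈ Icc (a-1) (0:ℝ) := by
        constructor
        · by_cases h : s' ≤ a
          · have h2 : ¬ s ≤ a := fun hsa => hboth ⟨hsa, h⟩
            push_neg at h2
            linarith [h1.1]
          · push_neg at h; linarith
        · exact hs'
      have := hK s hsmem s' hs'mem (by rw [Real.dist_eq]; exact lt_of_lt_of_le hss (min_le_left _ _))
      rwa [dist_eq_norm] at this

lemma surj_lemma (hν : NuCond m νp νn) {δ₀ : ℝ} (hδ₀ : 0 < δ₀) (hq : qmass νp νn δ₀ < 1/2)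
    {c : ℝ → ℝ} (hcpos : ∀ t, 0 ≤ t → 0 ≤ c t) (hcten : Tendsto c atTop (nhds 0))
    (hcst : ∀ x : ℝ → Fin m → ℝ, Continuous x → IsBU m x →
      (∀ t, 0 ≤ t → Dop m νp νn (shift m x t) = 0) → ∀ t, 0 ≤ t → ‖x t‖ ≤ c t * supNorm m x)
    {K : ℝ} (hK : 0 < K)
    (hML : ∀ (x : ℝ → Fin m → ℝ) (G : ℝ), 0 ≤ G → IsBU m x →
      (∀ s ≤ (0:ℝ), ‖Dop m νp νn (shift m x s)‖ ≤ G) → ∀ τ, τ ≤ (0:ℝ) → ‖x τ‖ ≤ K * G)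
    (h : ℝ → Fin m → ℝ) (hh : IsBU m h) :
    ∃ x : ℝ → Fin m → ℝ, IsBU m x ∧ ∀ s : ℝ, s ≤ 0 → Dhat m νp νn x s = h s := by
  classical
  obtain ⟨Ch, hCh⟩ := hh.1
  have hCh0 : 0 ≤ Ch := le_trans (norm_nonneg _) (hCh 0 le_rfl)
  set χ : ℕ → ℝ → ℝ := fun n t => min (max (t + n + 1) 0) 1 with hχ
  set gn : ℕ → ℝ → Fin m → ℝ := fun n t => χ n t • h (min t 0) with hgn
  have hχ0le : ∀ n t, 0 ≤ χ n t := fun n t => le_min (le_max_right _ _) (by norm_num)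
  have hχle1 : ∀ n t, χ n t ≤ 1 := fun n t => min_le_right _ _
  have hχ1 : ∀ (n : ℕ) (t : ℝ), -(n:ℝ) ≤ t → χ n t = 1 := by
    intro n t ht
    simp only [hχ]
    rw [max_eq_left (by linarith), min_eq_right (by linarith)]
  have hχ0 : ∀ (n : ℕ) (t : ℝ), t ≤ -(n:ℝ)-1 → χ n t = 0 := by
    intro n t ht
    simp only [hχ]
    rw [max_eq_right (by linarith), min_eq_left (by norm_num)]
  have hχlip : ∀ (n : ℕ) (s s' : ℝ), |χ n s - χ n s'| ≤ |s - s'| := by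
    intro n s s'
    simp only [hχ]
    calc |min (max (s + n + 1) 0) 1 - min (max (s' + n + 1) 0) 1| ≤
        |max (s + n + 1) 0 - max (s' + n + 1) 0| := minc_lip 1 _ _
      _ ≤ |(s + n + 1) - (s' + n + 1)| := maxc_lip 0 _ _
      _ = |s - s'| := by rw [show (s + n + 1) - (s' + n + 1) = s - s' from by ring]
  have hχcont : ∀ n, Continuous (χ n) :=
    fun n => (((continuous_id.add continuous_const).add continuous_const).max
      continuous_const).min continuous_const
  have hhmin : Continuous (fun t : ℝ => h (min t 0)) :=
    hh.continuousOn.comp_continuous (continuous_id.min continuous_const)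
      (fun t => mem_Iic.2 (min_le_right t 0))
  have hgncont : ∀ n, Continuous (gn n) := fun n => (hχcont n).smul hhmin
  have hgnb : ∀ n t, ‖gn n t‖ ≤ Ch := by
    intro n t
    simp only [hgn]
    rw [norm_smul, Real.norm_eq_abs, abs_of_nonneg (hχ0le n t)]
    calc χ n t * ‖h (min t 0)‖ ≤ 1 * Ch :=
        mul_le_mul (hχle1 n t) (hCh _ (min_le_right _ _)) (norm_nonneg _) one_pos.le
      _ = Ch := one_mul _
  have hgn_eqh : ∀ (n : ℕ) (t : ℝ), -(n:ℝ) ≤ t → t ≤ 0 → gn n t = h t := by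
    intro n t h1 h2
    simp only [hgn]
    rw [hχ1 n t h1, one_smul, min_eq_left h2]
  have hgn_eq : ∀ (p q : ℕ) (t : ℝ), -(p:ℝ) ≤ t → -(q:ℝ) ≤ t → gn p t = gn q t := by
    intro p q t h1 h2
    simp only [hgn]
    rw [hχ1 p t h1, hχ1 q t h2]
  have hgn0 : ∀ (n : ℕ) (t : ℝ), t ≤ -(n:ℝ)-1 → gn n t = 0 := by
    intro n t ht
    simp only [hgn]
    rw [hχ0 n t ht, zero_smul]
  have hgnlip : ∀ (n : ℕ) (a b : ℝ), ‖gn n a - gn n b‖ ≤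
      Ch * |a - b| + ‖h (min a 0) - h (min b 0)‖ := by
    intro n a b
    have e1 : gn n a - gn n b =
        (χ n a - χ n b) • h (min a 0) + χ n b • (h (min a 0) - h (min b 0)) := by
      simp only [hgn]
      rw [sub_smul, smul_sub]
      abel
    rw [e1]
    calc ‖(χ n a - χ n b) • h (min a 0) + χ n b • (h (min a 0) - h (min b 0))‖ ≤
        ‖(χ n a - χ n b) • h (min a 0)‖ + ‖χ n b • (h (min a 0) - h (min b 0))‖ :=
          norm_add_le _ _
      _ ≤ |a - b| * Ch + 1 * ‖h (min a 0) - h (min b 0)‖ := by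
          rw [norm_smul, norm_smul, Real.norm_eq_abs, Real.norm_eq_abs]
          refine add_le_add (mul_le_mul (hχlip n a b) (hCh _ (min_le_right _ _))
            (norm_nonneg _) (abs_nonneg _)) ?_
          refine mul_le_mul_of_nonneg_right ?_ (norm_nonneg _)
          rw [abs_of_nonneg (hχ0le n b)]
          exact hχle1 n b
      _ = Ch * |a - b| + ‖h (min a 0) - h (min b 0)‖ := by ring
  -- existence of approximations
  have hsol : ∀ n : ℕ, ∃ y : ℝ → Fin m → ℝ, Continuous y ∧ (∀ t ≤ -(n:ℝ)-1, y t = 0) ∧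
      (∀ b : ℝ, ∃ C, ∀ t ≤ b, ‖y t‖ ≤ C) ∧ ∀ t : ℝ, Dop m νp νn (shift m y t) = gn n t := by
    intro n
    have hφ : CB (fun _ : ℝ => (0 : Fin m → ℝ)) 0 :=
      CB.of_continuous continuous_const ⟨0, fun _ => by simp⟩ _
    have hgs : Continuous (fun t => gn n (t - ((n:ℝ)+1))) :=
      (hgncont n).comp (continuous_id.sub continuous_const)
    have hcompat : Dop m νp νn (fun _ : ℝ => (0:Fin m → ℝ)) = gn n ((0:ℝ) - ((n:ℝ)+1)) := by
      rw [Dop_zero', hgn0 n _ (by push_cast; linarith)]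
    obtain ⟨X, hXc, hXp, hXb, hXeq⟩ := exists_solution hν hδ₀ hq hφ hgs hcompat
    refine ⟨fun t => X (t + ((n:ℝ)+1)), hXc.comp (continuous_id.add continuous_const),
      ?_, ?_, ?_⟩
    · intro t ht
      exact hXp _ (by linarith)
    · intro b
      obtain ⟨C, hC⟩ := hXb (b + ((n:ℝ)+1))
      exact ⟨C, fun t ht => hC _ (by linarith)⟩
    · intro t
      by_cases h1 : -(n:ℝ)-1 ≤ t
      · have e1 : shift m (fun t => X (t + ((n:ℝ)+1))) t = shift m X (t + ((n:ℝ)+1)) :=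
          funext fun s => congrArg X (by ring)
        rw [e1, hXeq _ (by linarith)]
        congr 1
        ring
      · push_neg at h1
        have e1 : Dop m νp νn (shift m (fun t => X (t + ((n:ℝ)+1))) t) =
            Dop m νp νn (shift m (fun _ : ℝ => (0:Fin m→ℝ)) t) :=
          Dop_shift_congr (fun u hu => hXp _ (by linarith))
        rw [e1, show shift m (fun _ : ℝ => (0:Fin m→ℝ)) t = (fun _ => (0:Fin m→ℝ)) from rfl,
          Dop_zero', hgn0 n t (by linarith)]
  choose yn hync hynp hynb hyneq using hsol
  have hynBU : ∀ n, IsBU m (yn n) := by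
    intro n
    constructor
    · obtain ⟨C, hC⟩ := hynb n 0
      exact ⟨C, fun s hs => hC s hs⟩
    · exact uc_of_zero_past (hync n) (hynp n)
  have hynKb : ∀ n, ∀ τ ≤ (0:ℝ), ‖yn n τ‖ ≤ K * Ch := by
    intro n
    exact hML (yn n) Ch hCh0 (hynBU n)
      (fun s _ => by rw [hyneq n s]; exact hgnb n s)
  -- differences are eventually homogeneous
  have hdiff : ∀ (p q N : ℕ), N ≤ p → N ≤ q → ∀ τ : ℝ, -(N:ℝ) ≤ τ → τ ≤ 0 →
      ‖yn p τ - yn q τ‖ ≤ c (τ + N) * (2*(K*Ch)) := by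
    intro p q N hp hq τ hτ hτ0
    set Z : ℝ → Fin m → ℝ := fun t => yn p (t - N) - yn q (t - N) with hZ
    have hZc : Continuous Z := ((hync p).comp (continuous_id.sub continuous_const)).sub
      ((hync q).comp (continuous_id.sub continuous_const))
    have hZpast0 : ∀ t ≤ (-(((max p q : ℕ)):ℝ)-1 + N), Z t = 0 := by
      intro t ht
      have hp' : (p:ℝ) ≤ ((max p q : ℕ):ℝ) := Nat.cast_le.2 (le_max_left _ _)
      have hq' : (q:ℝ) ≤ ((max p q : ℕ):ℝ) := Nat.cast_le.2 (le_max_right _ _)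
      simp only [hZ]
      rw [hynp p _ (by linarith), hynp q _ (by linarith), sub_self]
    have hZb : ∀ s ≤ (0:ℝ), ‖Z s‖ ≤ 2*(K*Ch) := by
      intro s hs
      have hN0 : (0:ℝ) ≤ (N:ℝ) := Nat.cast_nonneg N
      simp only [hZ]
      calc ‖yn p (s-N) - yn q (s-N)‖ ≤ ‖yn p (s-N)‖ + ‖yn q (s-N)‖ := norm_sub_le _ _
        _ ≤ K*Ch + K*Ch := add_le_add (hynKb p _ (by linarith)) (hynKb q _ (by linarith))
        _ = 2*(K*Ch) := by ring
    have hZBU : IsBU m Z := ⟨⟨2*(K*Ch), hZb⟩, uc_of_zero_past hZc hZpast0⟩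
    have hZeq : ∀ t, 0 ≤ t → Dop m νp νn (shift m Z t) = 0 := by
      intro t ht
      have cbp : CB (fun u => yn p (u - N)) t :=
        ⟨((hync p).comp (continuous_id.sub continuous_const)).continuousOn,
          (hynb p (t - N)).imp fun C hC u hu => hC _ (by linarith)⟩
      have cbq : CB (fun u => yn q (u - N)) t :=
        ⟨((hync q).comp (continuous_id.sub continuous_const)).continuousOn,
          (hynb q (t - N)).imp fun C hC u hu => hC _ (by linarith)⟩
      have h1 := Dop_shift_sub hν cbp cbq (t := t)
      have e1 : shift m (fun u => yn p (u - N)) t = shift m (yn p) (t - N) :=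
        funext fun s => congrArg (yn p) (by ring)
      have e2 : shift m (fun u => yn q (u - N)) t = shift m (yn q) (t - N) :=
        funext fun s => congrArg (yn q) (by ring)
      rw [show shift m Z t = shift m (fun u => (fun u => yn p (u-N)) u - (fun u => yn q (u-N)) u) t
        from rfl, h1, e1, e2, hyneq p (t - N), hyneq q (t - N),
        hgn_eq p q (t - N) (by
          have : (N:ℝ) ≤ (p:ℝ) := Nat.cast_le.2 hp
          linarith) (by
          have : (N:ℝ) ≤ (q:ℝ) := Nat.cast_le.2 hq
          linarith)]
      funext i
      simp
    have hstab := hcst Z hZc hZBU hZeq (τ + N) (by linarith)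
    have hsup : supNorm m Z ≤ 2*(K*Ch) := supNorm_le hZb
    calc ‖yn p τ - yn q τ‖ = ‖Z (τ + N)‖ := by
          simp only [hZ]
          rw [show τ + (N:ℝ) - N = τ from by ring]
      _ ≤ c (τ+N) * supNorm m Z := hstab
      _ ≤ c (τ+N) * (2*(K*Ch)) :=
          mul_le_mul_of_nonneg_left hsup (hcpos _ (by linarith))
  -- Cauchy
  have hcauchy : ∀ τ : ℝ, τ ≤ 0 → ∃ L, Tendsto (fun n => yn n τ) atTop (nhds L) := by
    intro τ hτ
    apply cauchySeq_tendsto_of_complete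
    rw [Metric.cauchySeq_iff]
    intro ε hε
    have hKCh : (0:ℝ) ≤ 2*(K*Ch) := by positivity
    have hden : (0:ℝ) < 2*(K*Ch)+1 := by linarith
    have hev := hcten.eventually (eventually_lt_nhds (show (0:ℝ) < ε/(2*(K*Ch)+1) by positivity))
    rw [eventually_atTop] at hev
    obtain ⟨A, hA⟩ := hev
    obtain ⟨N, hN⟩ := exists_nat_ge (max (A - τ) (-τ))
    refine ⟨N, fun p hp q hq => ?_⟩
    rw [dist_eq_norm]
    have h1 : -(N:ℝ) ≤ τ := by
      have := le_trans (le_max_right (A - τ) (-τ)) hN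
      linarith
    have h2 : A ≤ τ + N := by
      have := le_trans (le_max_left (A - τ) (-τ)) hN
      linarith
    have h3 := hA _ h2
    have h4 : c (τ+N) * (2*(K*Ch)) ≤ c (τ+N) * (2*(K*Ch)+1) :=
      mul_le_mul_of_nonneg_left (by linarith) (hcpos _ (by linarith))
    have h5 : c (τ+N) * (2*(K*Ch)+1) < (ε/(2*(K*Ch)+1)) * (2*(K*Ch)+1) :=
      mul_lt_mul_of_pos_right h3 hden
    have h6 : (ε/(2*(K*Ch)+1)) * (2*(K*Ch)+1) = ε := div_mul_cancel₀ _ (ne_of_gt hden)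
    calc ‖yn p τ - yn q τ‖ ≤ c (τ+N) * (2*(K*Ch)) := hdiff p q N hp hq τ h1 hτ
      _ < ε := by linarith
  set x : ℝ → Fin m → ℝ := fun t => if ht : t ≤ 0 then (hcauchy t ht).choose else 0 with hx
  have hxlim : ∀ t, ∀ ht : t ≤ (0:ℝ), Tendsto (fun n => yn n t) atTop (nhds (x t)) := by
    intro t ht
    have h1 := (hcauchy t ht).choose_spec
    have h2 : x t = (hcauchy t ht).choose := by rw [hx]; exact dif_pos ht
    rw [h2]
    exact h1
  have hxb : ∀ s ≤ (0:ℝ), ‖x s‖ ≤ K*Ch := by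
    intro s hs
    exact le_of_tendsto (hxlim s hs).norm (Eventually.of_forall fun n => hynKb n s hs)
  have hxuc : ∀ ε > (0:ℝ), ∃ δ > (0:ℝ), ∀ s ≤ (0:ℝ), ∀ s' ≤ (0:ℝ), |s - s'| < δ →
      ‖x s - x s'‖ < ε := by
    intro ε hε
    obtain ⟨δh, hδh, huch⟩ := hh.2 (ε/(4*K)) (by positivity)
    have hδpos : (0:ℝ) < min δh (ε/(4*K*(Ch+1))) := lt_min hδh (by positivity)
    refine ⟨min δh (ε/(4*K*(Ch+1))), hδpos, fun s hs s' hs' hss => ?_⟩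
    have hstep : ∀ n, ‖yn n s - yn n s'‖ ≤ ε/2 := by
      intro n
      set w : ℝ → Fin m → ℝ := fun t => yn n (t + s) - yn n (t + s') with hw
      have hwc : Continuous w := ((hync n).comp (continuous_id.add continuous_const)).sub
        ((hync n).comp (continuous_id.add continuous_const))
      have hwpast : ∀ t ≤ (-(n:ℝ)-1 - max s s'), w t = 0 := by
        intro t ht
        have h1 : s ≤ max s s' := le_max_left _ _
        have h2 : s' ≤ max s s' := le_max_right _ _
        simp only [hw]
        rw [hynp n _ (by linarith), hynp n _ (by linarith), sub_self]
      have hwb : ∀ u ≤ (0:ℝ), ‖w u‖ ≤ 2*(K*Ch) := by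
        intro u hu
        simp only [hw]
        calc ‖yn n (u+s) - yn n (u+s')‖ ≤ ‖yn n (u+s)‖ + ‖yn n (u+s')‖ := norm_sub_le _ _
          _ ≤ K*Ch + K*Ch := add_le_add (hynKb n _ (by linarith)) (hynKb n _ (by linarith))
          _ = 2*(K*Ch) := by ring
      have hwBU : IsBU m w := ⟨⟨2*(K*Ch), hwb⟩, uc_of_zero_past hwc hwpast⟩
      have hweq : ∀ τ ≤ (0:ℝ), ‖Dop m νp νn (shift m w τ)‖ ≤ Ch * |s - s'| + ε/(4*K) := by
        intro τ hτ
        have cb1 : CB (fun t => yn n (t + s)) τ :=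
          ⟨((hync n).comp (continuous_id.add continuous_const)).continuousOn,
            (hynb n (τ + s)).imp fun C hC u hu => hC _ (by linarith)⟩
        have cb2 : CB (fun t => yn n (t + s')) τ :=
          ⟨((hync n).comp (continuous_id.add continuous_const)).continuousOn,
            (hynb n (τ + s')).imp fun C hC u hu => hC _ (by linarith)⟩
        have h1 := Dop_shift_sub hν cb1 cb2 (t := τ)
        have e1 : shift m (fun t => yn n (t + s)) τ = shift m (yn n) (τ + s) :=
          funext fun u => congrArg (yn n) (by ring)
        have e2 : shift m (fun t => yn n (t + s')) τ = shift m (yn n) (τ + s') :=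
          funext fun u => congrArg (yn n) (by ring)
        have h2 : Dop m νp νn (shift m w τ) =
            fun i => gn n (τ + s) i - gn n (τ + s') i := by
          rw [show shift m w τ =
            shift m (fun t => (fun t => yn n (t+s)) t - (fun t => yn n (t+s')) t) τ from rfl,
            h1, e1, e2, hyneq n (τ + s), hyneq n (τ + s')]
        rw [h2, show ‖(fun i => gn n (τ + s) i - gn n (τ + s') i)‖ =
          ‖gn n (τ + s) - gn n (τ + s')‖ from rfl]
        have h3 := hgnlip n (τ + s) (τ + s')
        have h4 : |(τ + s) - (τ + s')| = |s - s'| := by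
          rw [show (τ + s) - (τ + s') = s - s' from by ring]
        have h5 : ‖h (min (τ+s) 0) - h (min (τ+s') 0)‖ < ε/(4*K) := by
          apply huch _ (min_le_right _ _) _ (min_le_right _ _)
          calc |min (τ+s) 0 - min (τ+s') 0| ≤ |(τ+s) - (τ+s')| := minc_lip 0 _ _
            _ = |s - s'| := h4
            _ < δh := lt_of_lt_of_le hss (min_le_left _ _)
        rw [h4] at h3
        calc ‖gn n (τ + s) - gn n (τ + s')‖ ≤ Ch * |s - s'| +
            ‖h (min (τ+s) 0) - h (min (τ+s') 0)‖ := h3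
          _ ≤ Ch * |s - s'| + ε/(4*K) := by linarith
      have hG0 : 0 ≤ Ch * |s-s'| + ε/(4*K) := by positivity
      have hw0 := hML w _ hG0 hwBU hweq 0 le_rfl
      have e3 : w 0 = yn n s - yn n s' := by
        simp only [hw]
        rw [zero_add, zero_add]
      rw [e3] at hw0
      have h7 : K*Ch*|s-s'| ≤ K*Ch*(ε/(4*K*(Ch+1))) := by
        apply mul_le_mul_of_nonneg_left _ (by positivity)
        exact le_trans hss.le (min_le_right _ _)
      have h8 : K*Ch*(ε/(4*K*(Ch+1))) ≤ ε/4 := by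
        rw [← mul_div_assoc, div_le_div_iff₀ (by positivity) (by norm_num : (0:ℝ) < 4)]
        nlinarith [mul_nonneg hK.le hε.le]
      have h9 : K * (ε/(4*K)) = ε/4 := by
        rw [← mul_div_assoc, mul_comm K ε, mul_div_mul_right _ _ (ne_of_gt hK)]
      calc ‖yn n s - yn n s'‖ ≤ K * (Ch * |s-s'| + ε/(4*K)) := hw0
        _ = K*Ch*|s-s'| + K*(ε/(4*K)) := by ring
        _ ≤ ε/4 + ε/4 := by rw [h9]; linarith
        _ = ε/2 := by ring
    have hlim2 : Tendsto (fun n => yn n s - yn n s') atTop (nhds (x s - x s')) :=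
      (hxlim s hs).sub (hxlim s' hs')
    have := le_of_tendsto hlim2.norm (Eventually.of_forall hstep)
    linarith
  have hxBU : IsBU m x := ⟨⟨K*Ch, hxb⟩, hxuc⟩
  refine ⟨x, hxBU, ?_⟩
  intro s hs
  have hxCB : CB x s := hxBU.cb.mono hs
  have hIPlim : Tendsto (fun n => IP νp νn (yn n) s) atTop (nhds (IP νp νn x s)) := by
    rw [tendsto_pi_nhds]
    intro i
    apply tendsto_finset_sum
    intro j _
    have key : ∀ (μ : Measure ℝ), μ Set.univ ≠ ⊤ →
        Tendsto (fun n => ∫ u in Iic (0:ℝ), yn n (s+u) j ∂μ) atTop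
          (nhds (∫ u in Iic (0:ℝ), x (s+u) j ∂μ)) := by
      intro μ hμ
      haveI : IsFiniteMeasure (μ.restrict (Iic (0:ℝ))) := by
        constructor
        rw [Measure.restrict_apply_univ]
        exact lt_of_le_of_lt (measure_mono (subset_univ _)) (lt_top_iff_ne_top.2 hμ)
      apply MeasureTheory.tendsto_integral_of_dominated_convergence (bound := fun _ => K*Ch)
      · intro n
        exact ((continuous_apply j).comp ((hync n).comp
          (continuous_const.add continuous_id))).aestronglyMeasurable
      · exact MeasureTheory.integrable_const _
      · intro n
        refine (ae_restrict_iff' measurableSet_Iic).2 (ae_of_all _ fun u hu => ?_)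
        exact le_trans (norm_le_pi_norm _ j) (hynKb n _ (by
          have := mem_Iic.1 hu; linarith))
      · refine (ae_restrict_iff' measurableSet_Iic).2 (ae_of_all _ fun u hu => ?_)
        have hsu : s + u ≤ 0 := by have := mem_Iic.1 hu; linarith
        exact ((continuous_apply j).tendsto _).comp (hxlim (s+u) hsu)
    exact (key (νp i j) (hν.1 i j)).sub (key (νn i j) (hν.2.1 i j))
  funext i
  have hlhs : Tendsto (fun n => yn n s i - IP νp νn (yn n) s i) atTop
      (nhds (x s i - IP νp νn x s i)) :=
    (((continuous_apply i).tendsto _).comp (hxlim s hs)).sub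
      (((continuous_apply i).tendsto _).comp hIPlim)
  have hrhs : ∀ᶠ n in atTop, yn n s i - IP νp νn (yn n) s i = h s i := by
    rw [eventually_atTop]
    obtain ⟨N, hN⟩ := exists_nat_ge (-s)
    refine ⟨N, fun n hn => ?_⟩
    have e1 : Dop m νp νn (shift m (yn n) s) i = yn n s i - IP νp νn (yn n) s i :=
      congrFun (Dop_shift _ _) i
    rw [← e1, hyneq n s, hgn_eqh n s (by
      have h2 : (N:ℝ) ≤ (n:ℝ) := Nat.cast_le.2 hn
      linarith) hs]
  have h2 : Tendsto (fun n => yn n s i - IP νp νn (yn n) s i) atTop (nhds (h s i)) :=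
    Tendsto.congr' (hrhs.mono fun n hn => hn.symm) tendsto_const_nhds
  have hfin := tendsto_nhds_unique hlhs h2
  have e2 : Dhat m νp νn x s i = x s i - IP νp νn x s i := congrFun (Dop_shift x s) i
  rw [e2, hfin]
end S7h

section S7i
open MeasureTheory Set Filter
open scoped NNReal ENNReal

variable {m : ℕ} {νp νn : Fin m → Fin m → Measure ℝ}

lemma normOn_nonneg (n : ℕ) (z : ℝ → Fin m → ℝ) : 0 ≤ normOn m n z := by
  by_cases hb : BddAbove (Set.range fun s : Set.Icc (-(n:ℝ)) 0 => ‖z (s:ℝ)‖)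
  · exact le_trans (norm_nonneg _)
      (le_ciSup hb ⟨0, ⟨neg_nonpos.2 (Nat.cast_nonneg n), le_rfl⟩⟩)
  · rw [normOn, Real.iSup_of_not_bddAbove hb]

lemma normOn_le {n : ℕ} {z : ℝ → Fin m → ℝ} {C : ℝ} (hC : 0 ≤ C)
    (h : ∀ s, -(n:ℝ) ≤ s → s ≤ 0 → ‖z s‖ ≤ C) : normOn m n z ≤ C := by
  haveI : Nonempty (Set.Icc (-(n:ℝ)) 0) :=
    ⟨⟨0, ⟨neg_nonpos.2 (Nat.cast_nonneg n), le_rfl⟩⟩⟩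
  exact ciSup_le fun s => h s s.2.1 s.2.2

lemma le_normOn {n : ℕ} {z : ℝ → Fin m → ℝ} (hb : ∃ C, ∀ s ≤ (0:ℝ), ‖z s‖ ≤ C)
    {s : ℝ} (h1 : -(n:ℝ) ≤ s) (h2 : s ≤ 0) : ‖z s‖ ≤ normOn m n z := by
  obtain ⟨C, hC⟩ := hb
  exact le_ciSup (f := fun s : Set.Icc (-(n:ℝ)) 0 => ‖z (s:ℝ)‖)
    ⟨C, by rintro y ⟨u, rfl⟩; exact hC u u.2.2⟩ ⟨s, h1, h2⟩

lemma geo_summable : Summable (fun n : ℕ => (1/2:ℝ)^(n+1)) := by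
  have h1 : Summable (fun n : ℕ => (1/2:ℝ)^n) :=
    summable_geometric_of_lt_one (by norm_num) (by norm_num)
  have := h1.mul_left (1/2:ℝ)
  apply this.congr
  intro n
  rw [pow_succ]
  ring

lemma geo_tsum : ∑' n : ℕ, (1/2:ℝ)^(n+1) = 1 := by
  have h2 : ∀ n : ℕ, (1/2:ℝ)^(n+1) = 1/2/2^n := by
    intro n
    rw [div_pow, one_pow, div_div, pow_succ]
    ring_nf
  rw [tsum_congr h2]
  exact tsum_geometric_two' 1

lemma geo_partial (N : ℕ) : ∑ n ∈ Finset.range N, (1/2:ℝ)^(n+1) = 1 - (1/2)^N := by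
  induction N with
  | zero => simp
  | succ k ih =>
    rw [Finset.sum_range_succ, ih]
    ring

lemma coDist_term_nonneg (x y : ℝ → Fin m → ℝ) (n : ℕ) :
    0 ≤ (1/2:ℝ)^(n+1) * (normOn m (n+1) (fun s => x s - y s)) /
      (1 + normOn m (n+1) (fun s => x s - y s)) := by
  have h1 := normOn_nonneg (m := m) (n+1) (fun s => x s - y s)
  positivity

lemma coDist_term_le (x y : ℝ → Fin m → ℝ) (n : ℕ) :
    (1/2:ℝ)^(n+1) * (normOn m (n+1) (fun s => x s - y s)) /
      (1 + normOn m (n+1) (fun s => x s - y s)) ≤ (1/2:ℝ)^(n+1) := by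
  set a := normOn m (n+1) (fun s => x s - y s) with ha
  have h1 : 0 ≤ a := normOn_nonneg _ _
  rw [mul_div_assoc]
  calc (1/2:ℝ)^(n+1) * (a / (1+a)) ≤ (1/2:ℝ)^(n+1) * 1 := by
        refine mul_le_mul_of_nonneg_left ?_ (by positivity)
        rw [div_le_one (by linarith)]
        linarith
    _ = (1/2:ℝ)^(n+1) := mul_one _

lemma coDist_summable (x y : ℝ → Fin m → ℝ) :
    Summable (fun n : ℕ => (1/2:ℝ)^(n+1) * (normOn m (n+1) (fun s => x s - y s)) /
      (1 + normOn m (n+1) (fun s => x s - y s))) :=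
  Summable.of_nonneg_of_le (coDist_term_nonneg x y) (coDist_term_le x y) geo_summable

lemma coDist_le_of_small {x y : ℝ → Fin m → ℝ} {η : ℝ} (hη : 0 ≤ η) (N₀ : ℕ)
    (hsmall : ∀ n, n < N₀ → normOn m (n+1) (fun s => x s - y s) ≤ η) :
    coDist m x y ≤ η + (1/2)^N₀ := by
  have hsum := coDist_summable x y
  rw [coDist, ← Summable.sum_add_tsum_compl (s := Finset.range N₀) hsum]
  have hpart1 : ∑ n ∈ Finset.range N₀, (1/2:ℝ)^(n+1) *
      (normOn m (n+1) (fun s => x s - y s)) / (1 + normOn m (n+1) (fun s => x s - y s)) ≤ η := by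
    calc _ ≤ ∑ n ∈ Finset.range N₀, (1/2:ℝ)^(n+1) * η := by
          refine Finset.sum_le_sum fun n hn => ?_
          set a := normOn m (n+1) (fun s => x s - y s) with ha
          have h1 : 0 ≤ a := normOn_nonneg _ _
          have h2 : a ≤ η := hsmall n (Finset.mem_range.1 hn)
          rw [mul_div_assoc]
          refine mul_le_mul_of_nonneg_left ?_ (by positivity)
          calc a / (1+a) ≤ a := div_le_self h1 (by linarith)
            _ ≤ η := h2
      _ = (∑ n ∈ Finset.range N₀, (1/2:ℝ)^(n+1)) * η := by rw [Finset.sum_mul]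
      _ ≤ 1 * η := by
          refine mul_le_mul_of_nonneg_right ?_ hη
          rw [geo_partial]
          have : (0:ℝ) ≤ (1/2)^N₀ := by positivity
          linarith
      _ = η := one_mul _
  have hpart2 : (∑' n : ↑((↑(Finset.range N₀) : Set ℕ)ᶜ), (1/2:ℝ)^((n:ℕ)+1) *
      (normOn m ((n:ℕ)+1) (fun s => x s - y s)) /
      (1 + normOn m ((n:ℕ)+1) (fun s => x s - y s))) ≤ (1/2)^N₀ := by
    have hgeo := geo_summable
    have h1 : (∑' n : ↑((↑(Finset.range N₀) : Set ℕ)ᶜ), (1/2:ℝ)^((n:ℕ)+1) *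
        (normOn m ((n:ℕ)+1) (fun s => x s - y s)) /
        (1 + normOn m ((n:ℕ)+1) (fun s => x s - y s))) ≤
        ∑' n : ↑((↑(Finset.range N₀) : Set ℕ)ᶜ), (1/2:ℝ)^((n:ℕ)+1) :=
      Summable.tsum_le_tsum (fun n => coDist_term_le x y n)
        (hsum.subtype _) (hgeo.subtype _)
    have h2 := Summable.sum_add_tsum_compl (s := Finset.range N₀) hgeo
    rw [geo_partial, geo_tsum] at h2
    linarith
  exact add_le_add hpart1 hpart2

lemma ratio_lt {a b : ℝ} (ha : 0 ≤ a) (hb : 0 ≤ b) (h : a/(1+a) < b/(1+b)) : a < b := by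
  rw [div_lt_div_iff₀ (by linarith) (by linarith)] at h
  nlinarith
end S7i

/-- If `D` is stable, the operator `D̂ : BU → BU`,
`(D̂x)(s) = D x_s`, is bijective; its inverse is bounded for the supremum norm
and uniformly continuous on each ball `B_r` for the compact-open metric. -/
theorem statement7 (m : ℕ) (νp νn : Fin m → Fin m → Measure ℝ)
    (hν : NuCond m νp νn) (hst : IsStableOp m (Dop m νp νn)) :
    -- `D̂` maps `BU` into `BU`
    (∀ x : ℝ → Fin m → ℝ, IsBU m x → IsBU m (Dhat m νp νn x)) ∧
    -- `D̂` is injective on `BU`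
    (∀ x y : ℝ → Fin m → ℝ, IsBU m x → IsBU m y →
      (∀ s : ℝ, s ≤ 0 → Dhat m νp νn x s = Dhat m νp νn y s) →
      ∀ s : ℝ, s ≤ 0 → x s = y s) ∧
    -- `D̂` is onto `BU`
    (∀ h : ℝ → Fin m → ℝ, IsBU m h → ∃ x : ℝ → Fin m → ℝ, IsBU m x ∧
      ∀ s : ℝ, s ≤ 0 → Dhat m νp νn x s = h s) ∧
    -- `D̂⁻¹` is bounded for the supremum norm
    (∃ k : ℝ, 0 < k ∧ ∀ h x : ℝ → Fin m → ℝ, IsBU m h → IsBU m x →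
      (∀ s : ℝ, s ≤ 0 → Dhat m νp νn x s = h s) → supNorm m x ≤ k * supNorm m h) ∧
    -- `D̂⁻¹` is uniformly continuous on each `B_r` for the compact-open metric
    (∀ r > (0:ℝ), ∀ ε > (0:ℝ), ∃ δ > (0:ℝ),
      ∀ h₁ h₂ x₁ x₂ : ℝ → Fin m → ℝ, IsBU m h₁ → IsBU m h₂ → IsBU m x₁ → IsBU m x₂ →
        supNorm m h₁ ≤ r → supNorm m h₂ ≤ r →
        (∀ s : ℝ, s ≤ 0 → Dhat m νp νn x₁ s = h₁ s) →
        (∀ s : ℝ, s ≤ 0 → Dhat m νp νn x₂ s = h₂ s) →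
        coDist m h₁ h₂ < δ → coDist m x₁ x₂ < ε) := by
  classical
  obtain ⟨δ₀, hδ₀, hq⟩ := exists_delta0 hν
  obtain ⟨c, hcc, hcpos, hcten, hcst⟩ := hst
  obtain ⟨c₀, hc₀, hinv⟩ := const_inverse hν ⟨c, hcc, hcpos, hcten, hcst⟩
  obtain ⟨K, hK, hML⟩ := ML hν hδ₀ hq hcpos hcten hcst hc₀ hinv
  refine ⟨Dhat_BU hν, inj_lemma hν hML,
    fun h hh => surj_lemma hν hδ₀ hq hcpos hcten hcst hK hML h hh, ?_, ?_⟩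
  · -- bullet 4 : bounded inverse
    refine ⟨K, hK, fun h x hh hx hDx => ?_⟩
    have hhb : ∃ C, ∀ s ≤ (0:ℝ), ‖h s‖ ≤ C := hh.1.imp fun C hC s hs => hC s hs
    have hr : 0 ≤ supNorm m h := supNorm_nonneg hhb
    refine supNorm_le (fun τ hτ => hML x (supNorm m h) hr hx (fun s hs => ?_) τ hτ)
    have e : Dop m νp νn (shift m x s) = h s := hDx s hs
    rw [e]
    exact le_supNorm hhb hs
  · -- bullet 5 : uniform continuity of the inverse for the compact-open metric
    intro r hr ε hε
    obtain ⟨N₀, hN₀⟩ := exists_pow_lt_of_lt_one (show (0:ℝ) < ε/4 by linarith)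
      (show (1/2:ℝ) < 1 by norm_num)
    set η := ε/4 with hηdef
    have hη : 0 < η := by rw [hηdef]; linarith
    have hKr : (0:ℝ) < 2*K*r + 1 := by positivity
    have hev := (hcten.eventually (eventually_lt_nhds
      (show (0:ℝ) < η/(2*(2*K*r+1)) by positivity))).and (eventually_ge_atTop (1:ℝ))
    obtain ⟨T, hT2, hT1⟩ := hev.exists
    have hT : (0:ℝ) < T := lt_of_lt_of_le one_pos hT1
    obtain ⟨CT, hCT0, hdec⟩ := decomp hν hδ₀ hq hcpos hcst hc₀ hinv hT
    set coef := c T * c₀ + CT + c₀ with hcoef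
    have hcT0 : 0 ≤ c T := hcpos T hT.le
    have hcoef0 : 0 ≤ coef := by
      have h1 := mul_nonneg hcT0 hc₀
      rw [hcoef]
      linarith
    set η₂ := (η/2) / (coef + 1) with hη₂def
    have hη₂ : 0 < η₂ := div_pos (by linarith) (by linarith)
    set n₁ := N₀ + ⌈T⌉₊ with hn₁
    set δ := (1/2:ℝ)^(n₁+1) * (η₂/(1+η₂)) with hδdef
    have hδpos : 0 < δ := by
      rw [hδdef]
      have : 0 < η₂/(1+η₂) := div_pos hη₂ (by linarith)
      positivity
    refine ⟨δ, hδpos, ?_⟩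
    intro h₁ h₂ x₁ x₂ hh₁ hh₂ hx₁ hx₂ hr₁ hr₂ hD₁ hD₂ hcd
    have hb₁ : ∃ C, ∀ s ≤ (0:ℝ), ‖h₁ s‖ ≤ C := hh₁.1.imp fun C hC s hs => hC s hs
    have hb₂ : ∃ C, ∀ s ≤ (0:ℝ), ‖h₂ s‖ ≤ C := hh₂.1.imp fun C hC s hs => hC s hs
    have hx₁b : ∀ s ≤ (0:ℝ), ‖x₁ s‖ ≤ K*r := by
      intro s hs
      exact hML x₁ r (by linarith) hx₁ (fun u hu => by
        rw [show Dop m νp νn (shift m x₁ u) = h₁ u from hD₁ u hu]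
        exact le_trans (le_supNorm hb₁ hu) hr₁) s hs
    have hx₂b : ∀ s ≤ (0:ℝ), ‖x₂ s‖ ≤ K*r := by
      intro s hs
      exact hML x₂ r (by linarith) hx₂ (fun u hu => by
        rw [show Dop m νp νn (shift m x₂ u) = h₂ u from hD₂ u hu]
        exact le_trans (le_supNorm hb₂ hu) hr₂) s hs
    set z : ℝ → Fin m → ℝ := fun u => x₁ u - x₂ u with hzdef
    have hzBU : IsBU m z := hx₁.sub hx₂
    have hzb : ∀ s ≤ (0:ℝ), ‖z s‖ ≤ 2*K*r := by
      intro s hs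
      have e1 := hx₁b s hs
      have e2 := hx₂b s hs
      calc ‖z s‖ ≤ ‖x₁ s‖ + ‖x₂ s‖ := norm_sub_le _ _
        _ ≤ 2*K*r := by linarith
    have hgz : ∀ s ≤ (0:ℝ), Dop m νp νn (shift m z s) = fun i => h₁ s i - h₂ s i := by
      intro s hs
      rw [show shift m z s = shift m (fun u => x₁ u - x₂ u) s from rfl,
        Dop_shift_sub hν (hx₁.cb.mono hs) (hx₂.cb.mono hs)]
      funext i
      rw [show Dop m νp νn (shift m x₁ s) = h₁ s from hD₁ s hs,
        show Dop m νp νn (shift m x₂ s) = h₂ s from hD₂ s hs]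
    have hg'b : ∃ C, ∀ s ≤ (0:ℝ), ‖h₁ s - h₂ s‖ ≤ C :=
      ((hh₁.sub hh₂)).1.imp fun C hC s hs => hC s hs
    -- extract window smallness from the compact-open distance
    have hratio : normOn m (n₁+1) (fun s => h₁ s - h₂ s) < η₂ := by
      set a := normOn m (n₁+1) (fun s => h₁ s - h₂ s) with hadef
      have ha0 : 0 ≤ a := normOn_nonneg _ _
      have hterm : (1/2:ℝ)^(n₁+1) * a / (1 + a) ≤ coDist m h₁ h₂ :=
        Summable.le_tsum (coDist_summable h₁ h₂) n₁ (fun j _ => coDist_term_nonneg h₁ h₂ j)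
      rw [hδdef] at hcd
      have h2 : (1/2:ℝ)^(n₁+1) * a / (1 + a) < (1/2:ℝ)^(n₁+1) * (η₂/(1+η₂)) :=
        lt_of_le_of_lt hterm hcd
      have hppos : (0:ℝ) < (1/2:ℝ)^(n₁+1) := by positivity
      rw [mul_div_assoc] at h2
      have h3 : a/(1+a) < η₂/(1+η₂) := (mul_lt_mul_iff_right₀ hppos).1 h2
      exact ratio_lt ha0 hη₂.le h3
    have hWg : ∀ s, -((n₁:ℝ)+1) ≤ s → s ≤ 0 → ‖h₁ s - h₂ s‖ ≤ η₂ := by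
      intro s h1 h2
      refine le_trans (le_normOn hg'b (n := n₁+1) (by push_cast; linarith) h2) hratio.le
    have hzsmall : ∀ τ, -(N₀:ℝ) ≤ τ → τ ≤ 0 → ‖z τ‖ ≤ η := by
      intro τ h1 h2
      have hWτ : ∀ s, τ - T ≤ s → s ≤ 0 → ‖Dop m νp νn (shift m z s)‖ ≤ η₂ := by
        intro s hs1 hs2
        rw [hgz s hs2, show ‖(fun i => h₁ s i - h₂ s i)‖ = ‖h₁ s - h₂ s‖ from rfl]
        apply hWg s _ hs2
        have hTceil : T ≤ (⌈T⌉₊ : ℝ) := Nat.le_ceil T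
        rw [hn₁]
        push_cast
        linarith
      have hd := hdec z hzBU (2*K*r) η₂ hzb τ h2 hWτ
      have hKr0 : (0:ℝ) ≤ 2*K*r := by positivity
      have hp0 : c T * (2*K*r) ≤ η/2 := by
        have e1 : c T * (2*K*r) ≤ (η/(2*(2*K*r+1))) * (2*K*r) :=
          mul_le_mul_of_nonneg_right hT2.le hKr0
        have e2 : (η/(2*(2*K*r+1))) * (2*K*r) ≤ (η/(2*(2*K*r+1))) * (2*K*r+1) :=
          mul_le_mul_of_nonneg_left (by linarith) (by positivity)
        have e3 : (η/(2*(2*K*r+1))) * (2*K*r+1) = η/2 := by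
          field_simp
        linarith
      have hp1 : c T * (2*K*r + c₀ * η₂) ≤ η/2 + c T * c₀ * η₂ := by
        calc c T * (2*K*r + c₀ * η₂) = c T * (2*K*r) + c T * c₀ * η₂ := by ring
          _ ≤ η/2 + c T * c₀ * η₂ := by linarith
      have hp2 : c T * c₀ * η₂ + CT * η₂ + c₀ * η₂ ≤ η/2 := by
        have e1 : c T * c₀ * η₂ + CT * η₂ + c₀ * η₂ = coef * η₂ := by rw [hcoef]; ring
        rw [e1, hη₂def, ← mul_div_assoc, div_le_iff₀ (by linarith : (0:ℝ) < coef + 1)]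
        nlinarith [hη.le, hcoef0]
      calc ‖z τ‖ ≤ c T * (2*K*r + c₀ * η₂) + CT * η₂ + c₀ * η₂ := hd
        _ ≤ (η/2 + c T * c₀ * η₂) + CT * η₂ + c₀ * η₂ := by linarith
        _ ≤ η/2 + η/2 := by linarith
        _ = η := by ring
    have hcoD : coDist m x₁ x₂ ≤ η + (1/2)^N₀ := by
      apply coDist_le_of_small hη.le N₀
      intro n hn
      apply normOn_le hη.le
      intro s hs1 hs2
      apply hzsmall s _ hs2
      have hcast : ((n:ℝ)+1) ≤ (N₀:ℝ) := by exact_mod_cast Nat.succ_le_of_lt hn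
      push_cast at hs1
      linarith
    calc coDist m x₁ x₂ ≤ η + (1/2)^N₀ := hcoD
      _ < ε := by
          have h10 : η = ε/4 := hηdef
          linarith [hN₀, h10.le, h10.ge]
end

section
/- Let ν_ij (i,j ∈ {1,…,m}) be positive regular Borel measures on (−∞,0] with finite total variation, ν_ij({0}) = 0, and Σ_{j=1}^m ν_ij((−∞,0]) < 1 for each i, and let D: BU → ℝ^m be defined by D_i x = x_i(0) − Σ_{j=1}^m ∫_{−∞}^0 x_j(s) dν_ij(s). Then the inverse of the operator D̂ is positive: for every x ∈ BU, if Dx_s ≥ 0 (componentwise) for all s ≤ 0, then x(s) ≥ 0 for all s ≤ 0. -/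
open MeasureTheory Filter Set

/-!
Let `β` be the infimum of the components of `x` on `(-∞, 0]` and suppose `β < 0`. Since
`Dx_s ≥ 0` and the `ν_ij` are positive, `x_i(s) ≥ ∑_j ∫ x_j(s + u) dν_ij(u) ≥ K β`, where `K < 1`
bounds the row sums `∑_j ν_ij((-∞, 0])`. So `K β` is again a lower bound, hence `K β ≤ β`,
which is impossible for `β < 0`.
-/

/-- If `f` is not integrable the integral is `0`, which satisfies the bound as well since `c ≤ 0`. -/
theorem setIntegral_ge_mul_measureReal_of_nonpos {X : Type*} [MeasurableSpace X] {μ : Measure X}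
    {s : Set X} {f : X → ℝ} {c : ℝ} (hc : c ≤ 0) (hs : MeasurableSet s) (hμs : μ s ≠ ⊤)
    (hf : ∀ x ∈ s, c ≤ f x) :
    c * μ.real s ≤ ∫ x in s, f x ∂μ := by
  by_cases hint : IntegrableOn f s μ
  · exact setIntegral_ge_of_const_le_real hs hμs hf hint
  · rw [integral_undef hint]
    exact mul_nonpos_of_nonpos_of_nonneg hc measureReal_nonneg

theorem nonneg_of_lowerBound_contracts {α : Type*} {g : α → ℝ} (hg : BddBelow (range g))
    {K : ℝ} (hK : K < 1) (hcontract : ∀ β ≤ 0, (∀ a, β ≤ g a) → ∀ a, K * β ≤ g a) (a : α) :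
    0 ≤ g a := by
  have hinf : ∀ b, sInf (range g) ≤ g b := fun b => csInf_le hg (mem_range_self b)
  have hinf_nonneg : 0 ≤ sInf (range g) := by
    by_contra! hneg
    have hle : K * sInf (range g) ≤ sInf (range g) :=
      le_csInf (range_nonempty_iff_nonempty.2 ⟨a⟩)
        (forall_mem_range.2 (hcontract _ hneg.le hinf))
    nlinarith
  exact hinf_nonneg.trans (hinf a)

theorem exists_lt_forall_le_of_forall_lt {ι : Type*} [Finite ι] {f : ι → ℝ} {c : ℝ}
    (hf : ∀ i, f i < c) : ∃ K < c, ∀ i, f i ≤ K := by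
  obtain ⟨⟨K, hK⟩, hle⟩ := Finite.exists_le (fun i => (⟨f i, hf i⟩ : Iio c))
  exact ⟨K, hK, fun i => hle i⟩

theorem IsBU.bddBelow_range_apply {m : ℕ} {x : ℝ → Fin m → ℝ} (hx : IsBU m x) :
    BddBelow (range fun p : Iic (0 : ℝ) × Fin m => x p.1 p.2) := by
  obtain ⟨C, hC⟩ := hx.1
  refine ⟨-C, forall_mem_range.2 fun p => neg_le_of_abs_le ?_⟩
  exact (norm_le_pi_norm (x p.1) p.2).trans (hC p.1 p.1.2)

theorem Dop_zero_shift_apply (m : ℕ) (ν : Fin m → Fin m → Measure ℝ) (x : ℝ → Fin m → ℝ)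
    (s : ℝ) (i : Fin m) :
    Dop m ν (fun _ _ => 0) (shift m x s) i =
      x s i - ∑ j, ∫ u in Iic (0 : ℝ), x (s + u) j ∂(ν i j) := by
  simp only [Dop, shift, add_zero, Measure.restrict_zero, integral_zero_measure, sub_zero]

theorem mul_rowSum_le_of_Dop_shift_nonneg {m : ℕ} {ν : Fin m → Fin m → Measure ℝ}
    {x : ℝ → Fin m → ℝ} {s β : ℝ} {i : Fin m} (hfin : ∀ j, ν i j (Iic 0) ≠ ⊤) (hβ : β ≤ 0)
    (hlow : ∀ t ≤ 0, ∀ j, β ≤ x t j) (hs : s ≤ 0)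
    (hD : 0 ≤ Dop m ν (fun _ _ => 0) (shift m x s) i) :
    β * ∑ j, (ν i j (Iic 0)).toReal ≤ x s i := by
  have hintegral : ∀ j, β * (ν i j).real (Iic 0) ≤ ∫ u in Iic (0 : ℝ), x (s + u) j ∂(ν i j) :=
    fun j => setIntegral_ge_mul_measureReal_of_nonpos hβ measurableSet_Iic (hfin j)
      fun u hu => hlow (s + u) (add_nonpos hs hu) j
  rw [Dop_zero_shift_apply] at hD
  calc β * ∑ j, (ν i j (Iic 0)).toReal = ∑ j, β * (ν i j).real (Iic 0) := Finset.mul_sum _ _ _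
    _ ≤ ∑ j, ∫ u in Iic (0 : ℝ), x (s + u) j ∂(ν i j) := Finset.sum_le_sum fun j _ => hintegral j
    _ ≤ x s i := by linarith

theorem statement13_general (m : ℕ) (ν : Fin m → Fin m → Measure ℝ)
    (hfin : ∀ i j, ν i j Set.univ ≠ ⊤)
    (hsum : ∀ i, ∑ j : Fin m, (ν i j (Set.Iic 0)).toReal < 1)
    (x : ℝ → Fin m → ℝ) (hx : IsBU m x)
    (hpos : ∀ s : ℝ, s ≤ 0 → ∀ i, 0 ≤ Dop m ν (fun _ _ => 0) (shift m x s) i) :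
    ∀ s : ℝ, s ≤ 0 → ∀ i, 0 ≤ x s i := by
  obtain ⟨K, hK, hrow⟩ := exists_lt_forall_le_of_forall_lt hsum
  have hcontract : ∀ β ≤ 0, (∀ p : Iic (0 : ℝ) × Fin m, β ≤ x p.1 p.2) →
      ∀ p : Iic (0 : ℝ) × Fin m, K * β ≤ x p.1 p.2 := by
    rintro β hβ hlow ⟨⟨s, hs⟩, i⟩
    calc K * β ≤ β * ∑ j, (ν i j (Iic 0)).toReal := by
          rw [mul_comm]; exact mul_le_mul_of_nonpos_left (hrow i) hβ
      _ ≤ x s i := mul_rowSum_le_of_Dop_shift_nonneg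
          (fun j => measure_ne_top_of_subset (subset_univ _) (hfin i j)) hβ
          (fun t ht j => hlow (⟨t, ht⟩, j)) hs (hpos s hs i)
  exact fun s hs i =>
    nonneg_of_lowerBound_contracts hx.bddBelow_range_apply hK hcontract (⟨s, hs⟩, i)

/-- For positive `ν_ij` with `ν_ij({0}) = 0` and
`∑_j ν_ij((-∞,0]) < 1` for each `i`, the inverse of `D̂` is positive: if
`x ∈ BU` satisfies `D x_s ≥ 0` (componentwise) for all `s ≤ 0`, then
`x(s) ≥ 0` for all `s ≤ 0`. -/
theorem statement13 (m : ℕ) (ν : Fin m → Fin m → Measure ℝ)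
    (hfin : ∀ i j, ν i j Set.univ ≠ ⊤)
    (hsupp : ∀ i j, ν i j (Set.Ioi 0) = 0)
    (h0 : ∀ i j, ν i j {0} = 0)
    (hsum : ∀ i, ∑ j : Fin m, (ν i j (Set.Iic 0)).toReal < 1)
    (x : ℝ → Fin m → ℝ) (hx : IsBU m x)
    (hpos : ∀ s : ℝ, s ≤ 0 → ∀ i, 0 ≤ Dop m ν (fun _ _ => 0) (shift m x s) i) :
    ∀ s : ℝ, s ≤ 0 → ∀ i, 0 ≤ x s i :=
  statement13_general m ν hfin hsum x hx hpos
end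

section
/- Consider the non-autonomous compartmental NFDE with associated map F and assume (C1), (C3), (C4), (C5). Then for all t ∈ ℝ, all x, y ∈ BU with x ≤_D y, and all i ∈ {1,…,m}: F_i(t,y) − F_i(t,x) ≥ −Σ_{j=0}^m d_{ji} · [D_i y − D_i x] + Σ_{j=1}^m ∫_{−∞}^0 (y_j(s) − x_j(s)) dη_ij(s), where dη_ij = c_ij dμ_ij − Σ_{k=0}^m d_ki dν_ij. -/
open MeasureTheory Filter Set

/-! ### Compartmental systems

Indices: compartments are `j : Fin m`; in the first index of the transport
functions `g`, `0 : Fin (m+1)` denotes the environment `C_0` and `j.succ`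
denotes the compartment `C_j`.  `g i j t v` is the transport function `g̃_ij(t,v)`
and `It i t` is the inflow `Ĩ_i(t) = g̃_{i0}(t)`. -/

/-- The right-hand side of the compartmental system:
`F_i(t,x) = -g̃_{0i}(t,x_i(0)) - ∑_j g̃_{ji}(t,x_i(0))
  + ∑_j ∫_{-∞}^0 g̃_{ij}(t+s, x_j(s)) dμ_ij(s) + Ĩ_i(t)`. -/
noncomputable def Fcomp (m : ℕ) (μ : Fin m → Fin m → Measure ℝ)
    (g : Fin (m+1) → Fin m → ℝ → ℝ → ℝ) (It : Fin m → ℝ → ℝ)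
    (t : ℝ) (x : ℝ → Fin m → ℝ) : Fin m → ℝ :=
  fun i => - g 0 i t (x 0 i) - (∑ j : Fin m, g j.succ i t (x 0 i))
    + (∑ j : Fin m, ∫ s in Set.Iic (0:ℝ), g i.succ j (t + s) (x s j) ∂(μ i j))
    + It i t

/-- The total mass
`M(t,x) = ∑_i D_i x + ∑_i ∑_j ∫_{-∞}^0 (∫_s^0 g̃_{ji}(t+τ, x_i(τ)) dτ) dμ_ji(s)`. -/
noncomputable def Mass (m : ℕ) (μ ν : Fin m → Fin m → Measure ℝ)
    (g : Fin (m+1) → Fin m → ℝ → ℝ → ℝ) (t : ℝ) (x : ℝ → Fin m → ℝ) : ℝ :=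
  (∑ i : Fin m, Dop m ν (fun _ _ => 0) x i) +
    ∑ i : Fin m, ∑ j : Fin m,
      ∫ s in Set.Iic (0:ℝ), (∫ τ in s..(0:ℝ), g j.succ i (t + τ) (x τ i)) ∂(μ j i)

/-- (C1): the transport functions are `C¹`-admissible: `C¹` in the second
variable; `g̃` and `∂g̃/∂v` uniformly continuous and bounded on `ℝ × {v₀}` for
all `v₀`; all components monotone in the second variable; `g̃_ij(t,0) = 0`;
and the inflows `Ĩ_i ≥ 0` are bounded and uniformly continuous. -/
def C1cond (m : ℕ) (g : Fin (m+1) → Fin m → ℝ → ℝ → ℝ) (It : Fin m → ℝ → ℝ) : Prop :=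
  (∀ i j t, ContDiff ℝ 1 (fun v => g i j t v)) ∧
  (∀ i j (v : ℝ), ∃ C : ℝ, ∀ t : ℝ, |g i j t v| ≤ C) ∧
  (∀ i j (v : ℝ), ∀ ε > (0:ℝ), ∃ δ > (0:ℝ), ∀ t t' : ℝ, |t - t'| < δ →
    |g i j t v - g i j t' v| < ε) ∧
  (∀ i j (v : ℝ), ∃ C : ℝ, ∀ t : ℝ, |deriv (g i j t) v| ≤ C) ∧
  (∀ i j (v : ℝ), ∀ ε > (0:ℝ), ∃ δ > (0:ℝ), ∀ t t' : ℝ, |t - t'| < δ →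
    |deriv (g i j t) v - deriv (g i j t') v| < ε) ∧
  (∀ i j t, Monotone (g i j t)) ∧
  (∀ i j t, g i j t 0 = 0) ∧
  (∀ i (t : ℝ), 0 ≤ It i t) ∧
  (∀ i, ∃ C : ℝ, ∀ t : ℝ, |It i t| ≤ C) ∧
  (∀ i, ∀ ε > (0:ℝ), ∃ δ > (0:ℝ), ∀ t t' : ℝ, |t - t'| < δ → |It i t - It i t'| < ε)

/-- (C3): the `μ_ij` are positive Borel measures on `(-∞,0]` with
`μ_ij((-∞,0]) = 1` and `∫_{-∞}^0 |s| dμ_ij(s) < ∞`. -/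
def C3cond (m : ℕ) (μ : Fin m → Fin m → Measure ℝ) : Prop :=
  (∀ i j, μ i j (Set.Iic 0) = 1) ∧ (∀ i j, μ i j (Set.Ioi 0) = 0) ∧
  (∀ i j, MeasureTheory.IntegrableOn (fun s : ℝ => |s|) (Set.Iic 0) (μ i j))

/-- (C4): the `ν_ij` are positive Borel measures on `(-∞,0]` with finite total
variation, `ν_ij({0}) = 0` and `∑_j ν_ij((-∞,0]) < 1` for each `i` (so that
the associated `D`-operator is stable). -/
def C4cond (m : ℕ) (ν : Fin m → Fin m → Measure ℝ) : Prop :=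
  (∀ i j, ν i j Set.univ ≠ ⊤) ∧ (∀ i j, ν i j (Set.Ioi 0) = 0) ∧
  (∀ i j, ν i j {0} = 0) ∧ (∀ i, ∑ j : Fin m, (ν i j (Set.Iic 0)).toReal < 1)

/-- `cc i j = c_ij = inf_{(t,v)} ∂g̃_ij/∂v(t,v)` and
`dd i j = d_ij = sup_{(t,v)} ∂g̃_ij/∂v(t,v)`. -/
def CDcond (m : ℕ) (g : Fin (m+1) → Fin m → ℝ → ℝ → ℝ)
    (cc dd : Fin (m+1) → Fin m → ℝ) : Prop :=
  (∀ i j, IsGLB {y : ℝ | ∃ t v : ℝ, y = deriv (g i j t) v} (cc i j)) ∧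
  (∀ i j, IsLUB {y : ℝ | ∃ t v : ℝ, y = deriv (g i j t) v} (dd i j))

/-- (C5): the measures `dη_ij = c_ij dμ_ij - (∑_{k=0}^m d_ki) dν_ij` are
positive. -/
def C5cond (m : ℕ) (μ ν : Fin m → Fin m → Measure ℝ)
    (cc dd : Fin (m+1) → Fin m → ℝ) : Prop :=
  ∀ (i j : Fin m) (A : Set ℝ), MeasurableSet A →
    (∑ k : Fin (m+1), dd k i) * (ν i j A).toReal ≤ cc i.succ j * (μ i j A).toReal

/-- `zz` is a solution of the compartmental system `(d/dt) D z_t = F(t, z_t)`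
on `(-∞,T)`, with `z_0 ∈ BU`. -/
def IsSolOn (m : ℕ) (μ ν : Fin m → Fin m → Measure ℝ)
    (g : Fin (m+1) → Fin m → ℝ → ℝ → ℝ) (It : Fin m → ℝ → ℝ)
    (T : ℝ) (zz : ℝ → Fin m → ℝ) : Prop :=
  IsBU m zz ∧ ContinuousOn zz (Set.Iio T) ∧
  ∀ t ∈ Set.Ico (0:ℝ) T,
    HasDerivWithinAt (fun τ => Dop m ν (fun _ _ => 0) (shift m zz τ))
      (Fcomp m μ g It t (shift m zz t)) (Set.Ico 0 T) t

/-! Because `∑ⱼ ν_ij((-∞,0]) < 1`, the operator `D` is positive, so `x ≤_D y` forces `x ≤ y`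
pointwise on `(-∞,0]`. The mean value theorem then bounds every transport increment between
`c_ij` and `d_ij` times the increment of its argument, and the `ν`-integrals on the right-hand
side cancel against those inside `D_i y - D_i x`. -/

open scoped NNReal

theorem lipschitzWith_of_le_deriv_le {f : ℝ → ℝ} (hf : Differentiable ℝ f) {c d : ℝ}
    (hc : ∀ v, c ≤ deriv f v) (hd : ∀ v, deriv f v ≤ d) :
    LipschitzWith (max ‖c‖₊ ‖d‖₊) f :=
  lipschitzWith_of_nnnorm_deriv_le hf fun v => by
    rw [← NNReal.coe_le_coe, NNReal.coe_max, coe_nnnorm, coe_nnnorm, coe_nnnorm]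
    exact abs_le_max_abs_abs (hc v) (hd v)

theorem mul_setIntegral_sub_le_of_le_deriv {ρ : Measure ℝ} {G : ℝ → ℝ → ℝ} {c : ℝ}
    (hG : ∀ τ, Differentiable ℝ (G τ)) (hc : ∀ τ v, c ≤ deriv (G τ) v) {u v : ℝ → ℝ}
    (hu : IntegrableOn u (Iic 0) ρ) (hv : IntegrableOn v (Iic 0) ρ)
    (hGu : IntegrableOn (fun s => G s (u s)) (Iic 0) ρ)
    (hGv : IntegrableOn (fun s => G s (v s)) (Iic 0) ρ) (huv : ∀ s ≤ 0, u s ≤ v s) :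
    c * ∫ s in Iic 0, (v s - u s) ∂ρ ≤
      (∫ s in Iic 0, G s (v s) ∂ρ) - ∫ s in Iic 0, G s (u s) ∂ρ := by
  rw [← integral_sub hGv hGu, ← integral_const_mul]
  exact setIntegral_mono_on ((hv.sub hu).const_mul c) (hGv.sub hGu) measurableSet_Iic
    fun s hs => mul_sub_le_image_sub_of_le_deriv (hG s) (hc s) (huv s hs)

section BU

variable {m : ℕ} {z : ℝ → Fin m → ℝ}

theorem IsBU.continuousOn_s14 (hz : IsBU m z) : ContinuousOn z (Iic 0) := by
  intro s hs
  rw [Metric.continuousWithinAt_iff]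
  intro ε hε
  obtain ⟨δ, hδ, H⟩ := hz.2 ε hε
  exact ⟨δ, hδ, fun {s'} hs' hd => by
    rw [dist_eq_norm]; exact H s' hs' s hs (by rwa [Real.dist_eq] at hd)⟩

theorem IsBU.exists_abs_le (hz : IsBU m z) : ∃ C, ∀ s ≤ 0, ∀ k, |z s k| ≤ C := by
  obtain ⟨C, hC⟩ := hz.1
  exact ⟨C, fun s hs k => (norm_le_pi_norm (z s) k).trans (hC s hs)⟩

theorem IsBU.shift (hz : IsBU m z) {s : ℝ} (hs : s ≤ 0) : IsBU m (shift m z s) := by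
  obtain ⟨⟨C, hC⟩, huc⟩ := hz
  refine ⟨⟨C, fun τ hτ => hC _ (add_nonpos hs hτ)⟩, fun ε hε => ?_⟩
  obtain ⟨δ, hδ, H⟩ := huc ε hε
  refine ⟨δ, hδ, fun τ hτ τ' hτ' hd => H _ (add_nonpos hs hτ) _ (add_nonpos hs hτ') ?_⟩
  rwa [add_sub_add_left_eq_sub]

theorem IsBU.integrableOn_comp (hz : IsBU m z) {ρ : Measure ℝ} (hρ : ρ (Iic 0) ≠ ⊤)
    {G : ℝ → ℝ → ℝ} (hG : Continuous fun p : ℝ × ℝ => G p.1 p.2) {K : ℝ≥0}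
    (hGK : ∀ τ, LipschitzWith K (G τ)) (hG0 : ∀ τ, G τ 0 = 0) (k : Fin m) :
    IntegrableOn (fun s => G s (z s k)) (Iic 0) ρ := by
  obtain ⟨C, hC⟩ := hz.exists_abs_le
  have hcont : ContinuousOn (fun s => G s (z s k)) (Iic 0) :=
    hG.comp_continuousOn (continuousOn_id.prodMk
      ((continuous_apply k).comp_continuousOn hz.continuousOn_s14))
  refine ⟨hcont.aestronglyMeasurable measurableSet_Iic,
    HasFiniteIntegral.restrict_of_bounded (C := K * C) hρ.lt_top ?_⟩
  refine (ae_restrict_iff' measurableSet_Iic).2 (ae_of_all _ fun s hs => ?_)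
  calc ‖G s (z s k)‖ = dist (G s (z s k)) (G s 0) := by rw [hG0, dist_zero_right]
    _ ≤ K * dist (z s k) 0 := (hGK s).dist_le_mul _ _
    _ ≤ K * C := by
      rw [Real.dist_0_eq_abs]; exact mul_le_mul_of_nonneg_left (hC s hs k) K.2

theorem IsBU.integrableOn_apply (hz : IsBU m z) {ρ : Measure ℝ} (hρ : ρ (Iic 0) ≠ ⊤)
    (k : Fin m) : IntegrableOn (fun s => z s k) (Iic 0) ρ :=
  hz.integrableOn_comp hρ (G := fun _ v => v) continuous_snd (fun _ => LipschitzWith.id)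
    (fun _ => rfl) k

end BU

section Dop

variable {m : ℕ} {ν : Fin m → Fin m → Measure ℝ}

theorem Dop_sub_Dop (hν : ∀ j k, ν j k (Iic 0) ≠ ⊤) {x y : ℝ → Fin m → ℝ}
    (hx : IsBU m x) (hy : IsBU m y) (j : Fin m) :
    Dop m ν (fun _ _ => 0) y j - Dop m ν (fun _ _ => 0) x j =
      (y 0 j - x 0 j) - ∑ k, ∫ s in Iic 0, (y s k - x s k) ∂ν j k := by
  simp only [Dop, Measure.restrict_zero, integral_zero_measure, sub_zero]
  rw [Finset.sum_congr rfl fun k _ =>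
    integral_sub (hy.integrableOn_apply (hν j k) k) (hx.integrableOn_apply (hν j k) k),
    Finset.sum_sub_distrib]
  ring

/-- At the infimum `β` of `w` one gets `β ≥ β · maxⱼ ∑ₖ ν_jk((-∞,0])`, which forces `β ≥ 0`. -/
theorem nonneg_of_le_sum_setIntegral_shift (hν : ∀ j k, ν j k (Iic 0) ≠ ⊤)
    (hν1 : ∀ j, ∑ k, (ν j k (Iic 0)).toReal < 1) {w : ℝ → Fin m → ℝ}
    (hbdd : ∃ C, ∀ s ≤ 0, ∀ k, C ≤ w s k)
    (hint : ∀ s ≤ 0, ∀ j k, IntegrableOn (fun τ => w (s + τ) k) (Iic 0) (ν j k))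
    (hw : ∀ s ≤ 0, ∀ j, ∑ k, ∫ τ in Iic 0, w (s + τ) k ∂ν j k ≤ w s j) :
    ∀ s ≤ 0, ∀ j, 0 ≤ w s j := by
  intro s hs j
  have : Nonempty (Fin m) := ⟨j⟩
  obtain ⟨C, hC⟩ := hbdd
  set β := ⨅ p : Iic (0:ℝ) × Fin m, w p.1 p.2
  have hbdd : BddBelow (range fun p : Iic (0:ℝ) × Fin m => w p.1 p.2) := by
    refine ⟨C, ?_⟩
    rintro _ ⟨⟨⟨s, hs⟩, k⟩, rfl⟩
    exact hC s hs k
  have hβle : ∀ s ≤ 0, ∀ k, β ≤ w s k := fun s hs k => ciInf_le hbdd (⟨s, hs⟩, k)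
  have hlow : ∀ s ≤ 0, ∀ j, β * ∑ k, (ν j k (Iic 0)).toReal ≤ w s j := by
    intro s hs j
    refine le_trans ?_ (hw s hs j)
    rw [Finset.mul_sum]
    refine Finset.sum_le_sum fun k _ => ?_
    calc β * (ν j k (Iic 0)).toReal = ∫ _ in Iic 0, β ∂ν j k := by
          rw [setIntegral_const, smul_eq_mul, measureReal_def, mul_comm]
      _ ≤ _ := setIntegral_mono_on (integrableOn_const (hν j k)) (hint s hs j k)
          measurableSet_Iic fun τ hτ => hβle _ (add_nonpos hs hτ) k
  set r := Finset.univ.sup' Finset.univ_nonempty fun j => ∑ k, (ν j k (Iic 0)).toReal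
  have hr : r < 1 := (Finset.sup'_lt_iff _).2 fun j _ => hν1 j
  have hβ : 0 ≤ β := by
    by_contra! hneg
    have : β * r ≤ β := le_ciInf fun p =>
      (mul_le_mul_of_nonpos_left (Finset.le_sup' _ (Finset.mem_univ p.2)) hneg.le).trans
        (hlow p.1 p.1.2 p.2)
    nlinarith
  exact hβ.trans (hβle s hs j)

theorem IsBU.le_of_leD (hν : ∀ j k, ν j k (Iic 0) ≠ ⊤)
    (hν1 : ∀ j, ∑ k, (ν j k (Iic 0)).toReal < 1) {x y : ℝ → Fin m → ℝ}
    (hx : IsBU m x) (hy : IsBU m y) (hxy : leD m ν (fun _ _ => 0) x y) :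
    ∀ s ≤ 0, ∀ k, x s k ≤ y s k := by
  have key := nonneg_of_le_sum_setIntegral_shift hν hν1 (w := fun s k => y s k - x s k)
    ?_ ?_ ?_
  · exact fun s hs k => sub_nonneg.1 (key s hs k)
  · obtain ⟨Cx, hCx⟩ := hx.exists_abs_le
    obtain ⟨Cy, hCy⟩ := hy.exists_abs_le
    exact ⟨-Cy - Cx, fun s hs k => by
      linarith [abs_le.1 (hCx s hs k), abs_le.1 (hCy s hs k)]⟩
  · exact fun s hs j k => ((hy.shift hs).integrableOn_apply (hν j k) k).sub
      ((hx.shift hs).integrableOn_apply (hν j k) k)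
  · intro s hs j
    have hD := Dop_sub_Dop hν (hx.shift hs) (hy.shift hs) j
    have hDxy := hxy s hs j
    simp only [Dhat, _root_.shift, add_zero] at hD hDxy
    linarith

end Dop

section Compartmental

variable {m : ℕ} {g : Fin (m+1) → Fin m → ℝ → ℝ → ℝ} {It : Fin m → ℝ → ℝ}
  {cc dd : Fin (m+1) → Fin m → ℝ}

theorem C1cond.differentiable (hC1 : C1cond m g It) (i : Fin (m+1)) (j : Fin m) (τ : ℝ) :
    Differentiable ℝ (g i j τ) :=
  (hC1.1 i j τ).differentiable one_ne_zero

theorem CDcond.lipschitzWith (hcd : CDcond m g cc dd) (hC1 : C1cond m g It)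
    (i : Fin (m+1)) (j : Fin m) (τ : ℝ) :
    LipschitzWith (max ‖cc i j‖₊ ‖dd i j‖₊) (g i j τ) :=
  lipschitzWith_of_le_deriv_le (hC1.differentiable i j τ)
    (fun v => (hcd.1 i j).1 ⟨τ, v, rfl⟩) (fun v => (hcd.2 i j).1 ⟨τ, v, rfl⟩)

theorem CDcond.continuous_shift (hcd : CDcond m g cc dd) (hC1 : C1cond m g It)
    (i : Fin (m+1)) (j : Fin m) (t : ℝ) :
    Continuous fun p : ℝ × ℝ => g i j (t + p.1) p.2 := by
  refine continuous_prod_of_continuous_lipschitzWith' _ _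
    (fun τ => hcd.lipschitzWith hC1 i j (t + τ)) fun v => ?_
  have huc : UniformContinuous fun τ => g i j τ v :=
    Metric.uniformContinuous_iff.2 fun ε hε => by
      obtain ⟨δ, hδ, H⟩ := hC1.2.2.1 i j v ε hε
      exact ⟨δ, hδ, fun {a b} hd => H a b hd⟩
  exact huc.continuous.comp (continuous_const.add continuous_id)

theorem le_Fcomp_sub_Fcomp {μ : Fin m → Fin m → Measure ℝ} (hC1 : C1cond m g It)
    (hcd : CDcond m g cc dd) {i : Fin m} (hμ : ∀ j, μ i j (Iic 0) ≠ ⊤) (t : ℝ)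
    {x y : ℝ → Fin m → ℝ} (hx : IsBU m x) (hy : IsBU m y)
    (hle : ∀ s ≤ 0, ∀ k, x s k ≤ y s k) :
    -(∑ k, dd k i) * (y 0 i - x 0 i) +
        ∑ j, cc i.succ j * ∫ s in Iic 0, (y s j - x s j) ∂μ i j ≤
      Fcomp m μ g It t y i - Fcomp m μ g It t x i := by
  have hout : ∑ k, (g k i t (y 0 i) - g k i t (x 0 i)) ≤ (∑ k, dd k i) * (y 0 i - x 0 i) := by
    rw [Finset.sum_mul]
    exact Finset.sum_le_sum fun k _ => image_sub_le_mul_sub_of_deriv_le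
      (hC1.differentiable k i t) (fun v => (hcd.2 k i).1 ⟨t, v, rfl⟩) (hle 0 le_rfl i)
  have hin : ∀ j, cc i.succ j * ∫ s in Iic 0, (y s j - x s j) ∂μ i j ≤
      (∫ s in Iic 0, g i.succ j (t + s) (y s j) ∂μ i j) -
        ∫ s in Iic 0, g i.succ j (t + s) (x s j) ∂μ i j := fun j =>
    have hcomp : ∀ {z}, IsBU m z →
        IntegrableOn (fun s => g i.succ j (t + s) (z s j)) (Iic 0) (μ i j) := fun hz =>
      hz.integrableOn_comp (hμ j) (hcd.continuous_shift hC1 i.succ j t)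
        (fun τ => hcd.lipschitzWith hC1 i.succ j (t + τ)) (fun τ => hC1.2.2.2.2.2.2.1 _ _ _) j
    mul_setIntegral_sub_le_of_le_deriv (fun τ => hC1.differentiable i.succ j (t + τ))
      (fun τ v => (hcd.1 i.succ j).1 ⟨t + τ, v, rfl⟩) (hx.integrableOn_apply (hμ j) j)
      (hy.integrableOn_apply (hμ j) j) (hcomp hx) (hcomp hy) fun s hs => hle s hs j
  have hin_sum := Finset.sum_le_sum fun j (_ : j ∈ Finset.univ) => hin j
  rw [Fin.sum_univ_succ] at hout
  simp only [Fcomp, Finset.sum_sub_distrib] at hout hin_sum ⊢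
  linarith

end Compartmental

theorem statement14_general (m : ℕ) (μ ν : Fin m → Fin m → Measure ℝ)
    (g : Fin (m+1) → Fin m → ℝ → ℝ → ℝ) (It : Fin m → ℝ → ℝ)
    (cc dd : Fin (m+1) → Fin m → ℝ)
    (hC1 : C1cond m g It) (hC3 : C3cond m μ) (hC4 : C4cond m ν)
    (hcd : CDcond m g cc dd)
    (t : ℝ) (x y : ℝ → Fin m → ℝ) (hx : IsBU m x) (hy : IsBU m y)
    (hxy : leD m ν (fun _ _ => 0) x y) (i : Fin m) :
    Fcomp m μ g It t y i - Fcomp m μ g It t x i ≥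
      -(∑ j : Fin (m+1), dd j i) *
        (Dop m ν (fun _ _ => 0) y i - Dop m ν (fun _ _ => 0) x i) +
      ∑ j : Fin m,
        (cc i.succ j * (∫ s in Set.Iic (0:ℝ), (y s j - x s j) ∂(μ i j))
          - (∑ k : Fin (m+1), dd k i) *
            ∫ s in Set.Iic (0:ℝ), (y s j - x s j) ∂(ν i j)) := by
  obtain ⟨hμ1, -, -⟩ := hC3
  obtain ⟨hνuniv, -, -, hν1⟩ := hC4
  have hν : ∀ j k, ν j k (Iic 0) ≠ ⊤ := fun j k =>
    ne_top_of_le_ne_top (hνuniv j k) (measure_mono (subset_univ _))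
  have hμ : ∀ j, μ i j (Iic 0) ≠ ⊤ := fun j => by simp [hμ1]
  have hF := le_Fcomp_sub_Fcomp hC1 hcd hμ t hx hy (IsBU.le_of_leD hν hν1 hx hy hxy)
  rw [Dop_sub_Dop hν hx hy i, Finset.sum_sub_distrib, ← Finset.mul_sum]
  linarith

/-- (Lemma 4.1.) Under (C1), (C3), (C4), (C5), for all `t`,
all `x ≤_D y` in `BU` and all `i`:
`F_i(t,y) - F_i(t,x) ≥ -∑_{j=0}^m d_ji [D_i y - D_i x]
  + ∑_{j=1}^m ∫_{-∞}^0 (y_j(s) - x_j(s)) dη_ij(s)`,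
where `∫ (…) dη_ij = c_ij ∫ (…) dμ_ij - (∑_{k=0}^m d_ki) ∫ (…) dν_ij`. -/
theorem statement14 (m : ℕ) (μ ν : Fin m → Fin m → Measure ℝ)
    (g : Fin (m+1) → Fin m → ℝ → ℝ → ℝ) (It : Fin m → ℝ → ℝ)
    (cc dd : Fin (m+1) → Fin m → ℝ)
    (hC1 : C1cond m g It) (hC3 : C3cond m μ) (hC4 : C4cond m ν)
    (hcd : CDcond m g cc dd) (hC5 : C5cond m μ ν cc dd)
    (t : ℝ) (x y : ℝ → Fin m → ℝ) (hx : IsBU m x) (hy : IsBU m y)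
    (hxy : leD m ν (fun _ _ => 0) x y) (i : Fin m) :
    Fcomp m μ g It t y i - Fcomp m μ g It t x i ≥
      -(∑ j : Fin (m+1), dd j i) *
        (Dop m ν (fun _ _ => 0) y i - Dop m ν (fun _ _ => 0) x i) +
      ∑ j : Fin m,
        (cc i.succ j * (∫ s in Set.Iic (0:ℝ), (y s j - x s j) ∂(μ i j))
          - (∑ k : Fin (m+1), dd k i) *
            ∫ s in Set.Iic (0:ℝ), (y s j - x s j) ∂(ν i j)) :=
  statement14_general m μ ν g It cc dd hC1 hC3 hC4 hcd t x y hx hy hxy i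
end
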